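/- arXiv:2407.01254 — 7 statements merged into one kernel-verified Lean document; each statement's English description precedes it below -/
import Mathlib

section
/- Let V be a finite-dimensional real vector space. For any linear hyperplane H in S²V, every extremal point of the convex set P(H ∩ S²V^{≥0}) is also an extremal point of P(S²V^{≥0}). Consequently, P(H ∩ S²V^{≥0}) equals the convex hull of the rank-one points H ∩ S²P(V). -/
/-!
An extreme point `A` of the slice `ker f ∩ K`, where `K` is the set of trace-one positive
semidefinite matrices, has rank at most one: if `A` had orthonormal eigenvectors `u, w` with
positive eigenvalues, then the plane of trace-zero symmetric matrices supported on `span {u, w}`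
would meet `ker f` in a line, and a short segment of that line centred at `A` stays in the slice.
A unit rank-one matrix `v vᵀ` is extreme in `K` because every positive semidefinite summand of
`v vᵀ` vanishes on `v⊥`. The hull statement then follows from Krein–Milman, the rank-one part of
the slice being compact, hence having a compact convex hull in finite dimension.
-/

theorem eq_zero_of_sub_mem_of_add_mem_of_mem_extremePoints {E : Type*} [AddCommGroup E]
    [Module ℝ E] {A : Set E} {x y : E} (hx : x ∈ A.extremePoints ℝ) (hsub : x - y ∈ A)
    (hadd : x + y ∈ A) : y = 0 := by
  have hmid : x ∈ openSegment ℝ (x - y) (x + y) :=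
    ⟨1 / 2, 1 / 2, by norm_num, by norm_num, by norm_num, by module⟩
  simpa using ((mem_extremePoints.mp hx).2 _ hsub _ hadd hmid).1

/-- By Carathéodory, the hull is the finite union over `k ≤ dim E + 1` of the compact sets of
convex combinations of `k` points of `s`. -/
theorem IsCompact.convexHull_of_finiteDimensional {E : Type*} [AddCommGroup E] [Module ℝ E]
    [TopologicalSpace E] [ContinuousAdd E] [ContinuousSMul ℝ E] [FiniteDimensional ℝ E]
    {s : Set E} (hs : IsCompact s) : IsCompact (convexHull ℝ s) := by
  let combinations (k : ℕ) : Set E :=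
    (fun p : (Fin k → ℝ) × (Fin k → E) => ∑ i, p.1 i • p.2 i) ''
      (stdSimplex ℝ (Fin k) ×ˢ Set.univ.pi fun _ => s)
  have hcompact (k : ℕ) : IsCompact (combinations k) :=
    ((isCompact_stdSimplex ℝ _).prod (isCompact_univ_pi fun _ => hs)).image <| by fun_prop
  suffices convexHull ℝ s = ⋃ k ∈ Finset.range (Module.finrank ℝ E + 2), combinations k by
    rw [this]
    exact (Finset.range _).isCompact_biUnion fun k _ => hcompact k
  apply (Set.iUnion₂_subset fun k _ => ?_).antisymm' fun x hx => ?_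
  · rintro _ ⟨⟨w, z⟩, ⟨⟨hw₀, hw₁⟩, hz⟩, rfl⟩
    exact (convex_convexHull ℝ s).sum_mem (fun i _ => hw₀ i) hw₁
      fun i _ => subset_convexHull ℝ s (hz i (Set.mem_univ i))
  obtain ⟨ι, _, z, w, hzs, hind, hw₀, hw₁, rfl⟩ := eq_pos_convex_span_of_mem_convexHull hx
  have hcard : Fintype.card ι < Module.finrank ℝ E + 2 :=
    Nat.lt_succ_of_le (hind.card_le_finrank_succ.trans (Nat.succ_le_succ (Submodule.finrank_le _)))
  let e := Fintype.equivFin ι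
  refine Set.mem_biUnion (Finset.mem_range.mpr hcard) ⟨(w ∘ e.symm, z ∘ e.symm),
    ⟨⟨fun i => (hw₀ _).le, ?_⟩, fun i _ => hzs ⟨_, rfl⟩⟩, ?_⟩
  · simpa [e.symm.sum_comp] using hw₁
  · exact e.symm.sum_comp fun i => w i • z i

theorem IsCompact.eq_convexHull_of_extremePoints_subset {E : Type*} [AddCommGroup E]
    [Module ℝ E] [TopologicalSpace E] [T2Space E] [IsTopologicalAddGroup E] [ContinuousSMul ℝ E]
    [LocallyConvexSpace ℝ E] [FiniteDimensional ℝ E] {K S : Set E} (hK : IsCompact K)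
    (hKconv : Convex ℝ K) (hS : IsCompact S) (hext : K.extremePoints ℝ ⊆ S) (hSK : S ⊆ K) :
    K = convexHull ℝ S := by
  refine subset_antisymm ?_ (convexHull_min hSK hKconv)
  calc K = closure (convexHull ℝ (K.extremePoints ℝ)) :=
        (closure_convexHull_extremePoints hK hKconv).symm
    _ ⊆ closure (convexHull ℝ S) := closure_mono (convexHull_mono hext)
    _ = convexHull ℝ S := hS.convexHull_of_finiteDimensional.isClosed.closure_eq

theorem exists_ne_zero_sq_add_sq_le_and_mul_add_mul_eq_zero (α β : ℝ) {m : ℝ} (hm : 0 < m) :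
    ∃ s t : ℝ, (s, t) ≠ 0 ∧ s ^ 2 + t ^ 2 ≤ m ^ 2 ∧ s * α + t * β = 0 := by
  rcases eq_or_ne α 0 with rfl | hα
  · exact ⟨m, 0, by simp [hm.ne'], by simp, by simp⟩
  · have hr : 0 < √(α ^ 2 + β ^ 2) := Real.sqrt_pos.mpr (by positivity)
    refine ⟨-β * m / √(α ^ 2 + β ^ 2), α * m / √(α ^ 2 + β ^ 2), ?_, ?_, by ring⟩
    · simp [hα, hm.ne', hr.ne']
    · rw [div_pow, div_pow, Real.sq_sqrt (by positivity)]
      field_simp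
      linarith

variable {ι : Type*} [Fintype ι]

theorem isCompact_setOf_dotProduct_self_eq_one : IsCompact {v : ι → ℝ | v ⬝ᵥ v = 1} := by
  refine (isCompact_closedBall (0 : ι → ℝ) 1).of_isClosed_subset
    (isClosed_eq (by fun_prop) continuous_const) fun v (hv : ∑ i, v i * v i = 1) => ?_
  rw [mem_closedBall_zero_iff, pi_norm_le_iff_of_nonneg zero_le_one]
  intro i
  rw [Real.norm_eq_abs, abs_le_one_iff_mul_self_le_one, ← hv]
  exact Finset.single_le_sum (f := fun j => v j * v j) (fun j _ => mul_self_nonneg _)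
    (Finset.mem_univ i)

namespace Matrix

instance {m n : Type*} [Fintype m] [Fintype n] : LocallyConvexSpace ℝ (Matrix m n ℝ) :=
  inferInstanceAs (LocallyConvexSpace ℝ (m → n → ℝ))

theorem isClosed_setOf_posSemidef : IsClosed {A : Matrix ι ι ℝ | A.PosSemidef} := by
  have h : {A : Matrix ι ι ℝ | A.PosSemidef} =
      {A | Aᴴ = A} ∩ ⋂ x : ι → ℝ, {A | 0 ≤ x ⬝ᵥ (A *ᵥ x)} := by
    ext A
    simp [posSemidef_iff_dotProduct_mulVec, IsHermitian]
  rw [h]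
  exact (isClosed_eq (by fun_prop) continuous_id).inter
    (isClosed_iInter fun x => isClosed_le continuous_const (by fun_prop))

theorem posSemidef_vecMulVec_self (v : ι → ℝ) : (vecMulVec v v).PosSemidef := by
  simpa using posSemidef_vecMulVec_self_star v

theorem posSemidef_smul_vecMulVec_add_smul_vecMulVec_add (u w : ι → ℝ) {p q r : ℝ} (hp : 0 ≤ p)
    (hq : 0 ≤ q) (hr : r ^ 2 ≤ p * q) :
    (p • vecMulVec u u + q • vecMulVec w w + r • (vecMulVec u w + vecMulVec w u)).PosSemidef := by
  refine posSemidef_iff_dotProduct_mulVec.mpr ⟨?_, fun x => ?_⟩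
  · simp [IsHermitian, conjTranspose_eq_transpose_of_trivial, transpose_vecMulVec, add_comm]
  have hform : star x ⬝ᵥ ((p • vecMulVec u u + q • vecMulVec w w +
      r • (vecMulVec u w + vecMulVec w u)) *ᵥ x) =
      p * (x ⬝ᵥ u) ^ 2 + q * (x ⬝ᵥ w) ^ 2 + 2 * r * (x ⬝ᵥ u) * (x ⬝ᵥ w) := by
    simp only [star_trivial, add_mulVec, smul_mulVec, vecMulVec_mulVec, op_smul_eq_smul,
      dotProduct_add, dotProduct_smul, smul_eq_mul, dotProduct_comm _ x]
    ring
  rw [hform]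
  rcases hp.eq_or_lt with rfl | hp
  · obtain rfl : r = 0 := by nlinarith
    nlinarith [sq_nonneg (x ⬝ᵥ w)]
  · nlinarith [sq_nonneg (p * (x ⬝ᵥ u) + r * (x ⬝ᵥ w)),
      mul_nonneg (sub_nonneg.mpr hr) (sq_nonneg (x ⬝ᵥ w))]

theorem IsHermitian.dotProduct_eigenvectorBasis [DecidableEq ι] {A : Matrix ι ι ℝ}
    (hA : A.IsHermitian) (i j : ι) :
    ⇑(hA.eigenvectorBasis i) ⬝ᵥ ⇑(hA.eigenvectorBasis j) = if i = j then 1 else 0 := by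
  have h := hA.eigenvectorBasis.orthonormal
  rw [orthonormal_iff_ite] at h
  simpa [EuclideanSpace.inner_eq_star_dotProduct, dotProduct_comm, eq_comm] using h j i

theorem IsHermitian.eq_sum_eigenvalues_smul_vecMulVec [DecidableEq ι] {A : Matrix ι ι ℝ}
    (hA : A.IsHermitian) :
    A = ∑ i, hA.eigenvalues i • vecMulVec ⇑(hA.eigenvectorBasis i) ⇑(hA.eigenvectorBasis i) := by
  conv_lhs => rw [hA.spectral_theorem, Unitary.conjStarAlgAut_apply]
  ext a b
  simp only [mul_apply, sum_apply, vecMulVec, eigenvectorUnitary_apply, RCLike.ofReal_real_eq_id,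
    CompTriple.comp_eq, diagonal_apply, mul_ite, mul_zero, Finset.sum_ite_eq', Finset.mem_univ,
    ↓reduceIte, star_apply, star_trivial, smul_apply, of_apply, smul_eq_mul]
  exact Finset.sum_congr rfl fun k _ => by ring

theorem PosSemidef.eq_vecMulVec_self_or_sub_posSemidef {A : Matrix ι ι ℝ} (hA : A.PosSemidef) :
    (∃ v, A = vecMulVec v v) ∨ ∃ (u w : ι → ℝ) (m : ℝ), u ⬝ᵥ u = 1 ∧ w ⬝ᵥ w = 1 ∧ u ⬝ᵥ w = 0 ∧
      0 < m ∧ (A - m • (vecMulVec u u + vecMulVec w w)).PosSemidef := by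
  classical
  set μ := hA.isHermitian.eigenvalues
  set e : ι → ι → ℝ := fun i => ⇑(hA.isHermitian.eigenvectorBasis i)
  have hspec : A = ∑ k, μ k • vecMulVec (e k) (e k) :=
    hA.isHermitian.eq_sum_eigenvalues_smul_vecMulVec
  have hμ (k : ι) : 0 ≤ μ k := hA.eigenvalues_nonneg k
  by_cases htwo : ∃ i j, i ≠ j ∧ 0 < μ i ∧ 0 < μ j
  · obtain ⟨i, j, hij, hi, hj⟩ := htwo
    refine .inr ⟨e i, e j, min (μ i) (μ j), ?_, ?_, ?_, lt_min hi hj, ?_⟩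
    · simpa using hA.isHermitian.dotProduct_eigenvectorBasis i i
    · simpa using hA.isHermitian.dotProduct_eigenvectorBasis j j
    · simpa [hij] using hA.isHermitian.dotProduct_eigenvectorBasis i j
    have hsum : A - min (μ i) (μ j) • (vecMulVec (e i) (e i) + vecMulVec (e j) (e j)) =
        ∑ k, (μ k - ((if k = i then min (μ i) (μ j) else 0) +
          (if k = j then min (μ i) (μ j) else 0))) • vecMulVec (e k) (e k) := by
      simp [hspec, sub_smul, add_smul, Finset.sum_sub_distrib, Finset.sum_add_distrib, ite_smul]
    rw [hsum]
    refine posSemidef_sum _ fun k _ => (posSemidef_vecMulVec_self _).smul ?_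
    have := min_le_left (μ i) (μ j)
    have := min_le_right (μ i) (μ j)
    split_ifs with hki hkj hkj <;> subst_vars
    · exact absurd rfl hij
    all_goals linarith [hμ k]
  push Not at htwo
  refine .inl ?_
  by_cases hpos : ∃ i, 0 < μ i
  · obtain ⟨i, hi⟩ := hpos
    have hA_eq : A = μ i • vecMulVec (e i) (e i) := hspec.trans <| Finset.sum_eq_single i
      (fun k _ hk => by rw [le_antisymm (htwo i k hk.symm hi) (hμ k), zero_smul]) (by simp)
    refine ⟨√(μ i) • e i, ?_⟩
    rw [hA_eq, smul_vecMulVec, vecMulVec_smul, smul_smul, Real.mul_self_sqrt (hμ i)]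
  · push Not at hpos
    refine ⟨0, ?_⟩
    simp [hspec, le_antisymm (hpos _) (hμ _)]

theorem PosSemidef.eq_vecMulVec_self_of_dotProduct_mulVec_eq_zero {B : Matrix ι ι ℝ}
    (hB : B.PosSemidef) (htr : B.trace = 1) {v : ι → ℝ} (hv : v ⬝ᵥ v = 1)
    (hker : ∀ x, v ⬝ᵥ x = 0 → x ⬝ᵥ (B *ᵥ x) = 0) : B = vecMulVec v v := by
  have hBx (x : ι → ℝ) : B *ᵥ x = (v ⬝ᵥ x) • B *ᵥ v := by
    have hperp : v ⬝ᵥ (x - (v ⬝ᵥ x) • v) = 0 := by simp [dotProduct_sub, hv]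
    have h := (hB.dotProduct_mulVec_zero_iff _).mp (by rw [star_trivial]; exact hker _ hperp)
    rwa [mulVec_sub, mulVec_smul, sub_eq_zero] at h
  have hB_col : B = vecMulVec (B *ᵥ v) v :=
    ext_iff_mulVec.mpr fun x => by rw [hBx, vecMulVec_mulVec, op_smul_eq_smul]
  have hB_row : B = vecMulVec v (B *ᵥ v) := by
    rw [← transpose_vecMulVec, ← hB_col, (isHermitian_iff_isSymm.mp hB.isHermitian).eq]
  have hBv : B *ᵥ v = v := by
    have htr' : B *ᵥ v ⬝ᵥ v = 1 := by rwa [hB_col, trace_vecMulVec] at htr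
    conv_lhs => rw [hB_row, vecMulVec_mulVec, htr']
    simp
  rwa [hBv] at hB_col

end Matrix

open Matrix

/-- `P(S²V^{≥0})`, each ray represented by its point of trace one. -/
def traceOnePSD (ι : Type*) [Fintype ι] : Set (Matrix ι ι ℝ) := {A | A.PosSemidef ∧ A.trace = 1}

/-- `S²P(V)`, each ray represented by its point of trace one. -/
def traceOneRankOne (ι : Type*) [Fintype ι] : Set (Matrix ι ι ℝ) :=
  {A | A.trace = 1 ∧ ∃ v, A = vecMulVec v v}

theorem convex_traceOnePSD : Convex ℝ (traceOnePSD ι) := by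
  rintro A ⟨hA, htrA⟩ B ⟨hB, htrB⟩ a b ha hb hab
  exact ⟨(hA.smul ha).add (hB.smul hb), by simp [htrA, htrB, hab]⟩

theorem traceOneRankOne_subset_traceOnePSD : traceOneRankOne ι ⊆ traceOnePSD ι := by
  rintro _ ⟨htr, v, rfl⟩
  exact ⟨posSemidef_vecMulVec_self v, htr⟩

theorem isCompact_traceOneRankOne : IsCompact (traceOneRankOne ι) := by
  have h : traceOneRankOne ι = (fun v => vecMulVec v v) '' {v : ι → ℝ | v ⬝ᵥ v = 1} := by
    ext A
    constructor
    · rintro ⟨htr, v, rfl⟩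
      exact ⟨v, by simpa using htr, rfl⟩
    · rintro ⟨v, hv, rfl⟩
      exact ⟨by simpa using hv, v, rfl⟩
  rw [h]
  exact isCompact_setOf_dotProduct_self_eq_one.image (by fun_prop)

theorem traceOnePSD_subset_convexHull_traceOneRankOne :
    traceOnePSD ι ⊆ convexHull ℝ (traceOneRankOne ι) := by
  classical
  rintro A ⟨hA, htr⟩
  have hspec := hA.isHermitian.eq_sum_eigenvalues_smul_vecMulVec
  have hunit (i : ι) : ⇑(hA.isHermitian.eigenvectorBasis i) ⬝ᵥ
      ⇑(hA.isHermitian.eigenvectorBasis i) = 1 := by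
    simpa using hA.isHermitian.dotProduct_eigenvectorBasis i i
  rw [hspec] at htr ⊢
  refine (convex_convexHull ℝ _).sum_mem (fun i _ => hA.eigenvalues_nonneg i) ?_
    fun i _ => subset_convexHull ℝ _ ⟨by simp [hunit], _, rfl⟩
  simpa [trace_sum, hunit] using htr

theorem isCompact_traceOnePSD : IsCompact (traceOnePSD ι) :=
  isCompact_traceOneRankOne.convexHull_of_finiteDimensional.of_isClosed_subset
    (isClosed_setOf_posSemidef.inter (isClosed_eq (by fun_prop) continuous_const))
    traceOnePSD_subset_convexHull_traceOneRankOne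

theorem vecMulVec_mem_extremePoints_traceOnePSD {v : ι → ℝ} (hv : v ⬝ᵥ v = 1) :
    vecMulVec v v ∈ (traceOnePSD ι).extremePoints ℝ := by
  refine mem_extremePoints.mpr ⟨⟨posSemidef_vecMulVec_self v, by simp [hv]⟩, ?_⟩
  rintro B ⟨hB, hBtr⟩ C ⟨hC, hCtr⟩ ⟨a, b, ha, hb, -, hsum⟩
  have hforms (x : ι → ℝ) (hx : v ⬝ᵥ x = 0) :
      x ⬝ᵥ (B *ᵥ x) = 0 ∧ x ⬝ᵥ (C *ᵥ x) = 0 := by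
    have hB₀ : 0 ≤ x ⬝ᵥ (B *ᵥ x) := by simpa using hB.dotProduct_mulVec_nonneg x
    have hC₀ : 0 ≤ x ⬝ᵥ (C *ᵥ x) := by simpa using hC.dotProduct_mulVec_nonneg x
    have hcomb : a * (x ⬝ᵥ (B *ᵥ x)) + b * (x ⬝ᵥ (C *ᵥ x)) = 0 := by
      simpa [add_mulVec, smul_mulVec, vecMulVec_mulVec, hx] using
        congrArg (fun M => x ⬝ᵥ (M *ᵥ x)) hsum
    constructor <;> nlinarith [mul_nonneg ha.le hB₀, mul_nonneg hb.le hC₀]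
  exact ⟨hB.eq_vecMulVec_self_of_dotProduct_mulVec_eq_zero hBtr hv fun x hx => (hforms x hx).1,
    hC.eq_vecMulVec_self_of_dotProduct_mulVec_eq_zero hCtr hv fun x hx => (hforms x hx).2⟩

theorem exists_eq_vecMulVec_of_mem_extremePoints_inter_traceOnePSD
    (f : Matrix ι ι ℝ →ₗ[ℝ] ℝ) {A : Matrix ι ι ℝ}
    (hA : A ∈ ({A | f A = 0} ∩ traceOnePSD ι).extremePoints ℝ) : ∃ v, A = vecMulVec v v := by
  obtain ⟨hfA : f A = 0, hA_psd, htrA⟩ := hA.1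
  obtain hrank | ⟨u, w, m, hu, hw, huw, hm, hR⟩ := hA_psd.eq_vecMulVec_self_or_sub_posSemidef
  · exact hrank
  exfalso
  set X := vecMulVec u u - vecMulVec w w
  set Y := vecMulVec u w + vecMulVec w u
  have hmem (s t : ℝ) (hdisk : s ^ 2 + t ^ 2 ≤ m ^ 2) (hf : s * f X + t * f Y = 0) :
      A + (s • X + t • Y) ∈ {A | f A = 0} ∩ traceOnePSD ι := by
    have hsplit : A + (s • X + t • Y) = (A - m • (vecMulVec u u + vecMulVec w w)) +
        ((m + s) • vecMulVec u u + (m - s) • vecMulVec w w + t • Y) := by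
      simp only [X]; module
    refine ⟨by simpa [hfA] using hf, ?_, ?_⟩
    · rw [hsplit]
      refine hR.add (posSemidef_smul_vecMulVec_add_smul_vecMulVec_add u w ?_ ?_ ?_) <;> nlinarith
    · simp [X, Y, htrA, hu, hw, huw, dotProduct_comm w u]
  obtain ⟨s, t, hst, hdisk, hf⟩ :=
    exists_ne_zero_sq_add_sq_le_and_mul_add_mul_eq_zero (f X) (f Y) hm
  have hB : s • X + t • Y = 0 := by
    refine eq_zero_of_sub_mem_of_add_mem_of_mem_extremePoints hA ?_ (hmem s t hdisk hf)
    convert hmem (-s) (-t) (by simpa using hdisk) (by linarith) using 1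
    module
  have hBu : (s • X + t • Y) *ᵥ u = s • u + t • w := by
    simp [X, Y, add_mulVec, sub_mulVec, smul_mulVec, vecMulVec_mulVec, hu, huw,
      dotProduct_comm w u]
  rw [hB, zero_mulVec] at hBu
  refine hst (Prod.ext ?_ ?_)
  · simpa [hu, huw] using (congrArg (u ⬝ᵥ ·) hBu).symm
  · simpa [hw, huw, dotProduct_comm w u] using (congrArg (w ⬝ᵥ ·) hBu).symm

theorem extremePoints_hyperplane_slice_and_hull_general (n : ℕ)
    (f : Matrix (Fin n) (Fin n) ℝ →ₗ[ℝ] ℝ) :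
    (∀ A ∈ Set.extremePoints ℝ
        {A : Matrix (Fin n) (Fin n) ℝ | f A = 0 ∧ A.PosSemidef ∧ A.trace = 1},
      A ∈ Set.extremePoints ℝ
        {A : Matrix (Fin n) (Fin n) ℝ | A.PosSemidef ∧ A.trace = 1}) ∧
    {A : Matrix (Fin n) (Fin n) ℝ | f A = 0 ∧ A.PosSemidef ∧ A.trace = 1} =
      convexHull ℝ {A : Matrix (Fin n) (Fin n) ℝ |
        f A = 0 ∧ A.trace = 1 ∧ ∃ v : Fin n → ℝ, A = Matrix.vecMulVec v v} := by
  have hker : IsClosed {A : Matrix (Fin n) (Fin n) ℝ | f A = 0} :=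
    isClosed_eq f.continuous_of_finiteDimensional continuous_const
  have hext : ({A | f A = 0} ∩ traceOnePSD (Fin n)).extremePoints ℝ ⊆
      {A | f A = 0} ∩ traceOneRankOne (Fin n) := fun A hA => by
    obtain ⟨v, rfl⟩ := exists_eq_vecMulVec_of_mem_extremePoints_inter_traceOnePSD f hA
    exact ⟨hA.1.1, hA.1.2.2, v, rfl⟩
  refine ⟨fun A hA => ?_, ?_⟩
  · obtain ⟨-, htr, v, rfl⟩ := hext hA
    exact vecMulVec_mem_extremePoints_traceOnePSD (by simpa using htr)
  · exact (isCompact_traceOnePSD.inter_left hker).eq_convexHull_of_extremePoints_subset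
      ((convex_hyperplane f.isLinear 0).inter convex_traceOnePSD)
      (isCompact_traceOneRankOne.inter_left hker) hext
      (Set.inter_subset_inter_right _ traceOneRankOne_subset_traceOnePSD)

/-- For a linear hyperplane `H = ker f` in the space of symmetric tensors
(modelled as symmetric matrices, with the projectivized PSD cone modelled by its
trace-one slice), every extreme point of `P(H ∩ S²V^{≥0})` is an extreme point of
`P(S²V^{≥0})`, and `P(H ∩ S²V^{≥0})` is the convex hull of the rank-one points
`H ∩ S²P(V)`. -/
theorem extremePoints_hyperplane_slice_and_hull (n : ℕ)
    (f : Matrix (Fin n) (Fin n) ℝ →ₗ[ℝ] ℝ)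
    (hf : ∃ A : Matrix (Fin n) (Fin n) ℝ, A.IsSymm ∧ f A ≠ 0) :
    (∀ A ∈ Set.extremePoints ℝ
        {A : Matrix (Fin n) (Fin n) ℝ | f A = 0 ∧ A.PosSemidef ∧ A.trace = 1},
      A ∈ Set.extremePoints ℝ
        {A : Matrix (Fin n) (Fin n) ℝ | A.PosSemidef ∧ A.trace = 1}) ∧
    {A : Matrix (Fin n) (Fin n) ℝ | f A = 0 ∧ A.PosSemidef ∧ A.trace = 1} =
      convexHull ℝ {A : Matrix (Fin n) (Fin n) ℝ |
        f A = 0 ∧ A.trace = 1 ∧ ∃ v : Fin n → ℝ, A = Matrix.vecMulVec v v} :=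
  extremePoints_hyperplane_slice_and_hull_general n f
end

section
/- Let V be a finite-dimensional real vector space and let P₁, P₂ be d-dimensional subspaces of Q = S²V* consisting of mixed pencils (i.e. containing no nonzero positive semidefinite quadric). The following are equivalent: (i) the sets P(P₁° ∩ S²V^{≥0}) and P(P₂° ∩ S²V^{≥0}) are disjoint; (ii) there exist q₁ ∈ P₁ and q₂ ∈ P₂ such that q₂ − q₁ is positive definite; (iii) there exist q₁ ∈ P₁ and q₂ ∈ P₂ with {q₁ ≥ 0} ⊆ {q₂ > 0} in P(V). -/
/-!
(iii) ⇒ (i) is an S-lemma type argument. A positive semidefinite `p` with `tr (q₁ p) = 0` is a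
sum of rank-one tensors `w wᵀ`, and rotating two of the vectors `w` in their common plane does not
change `∑ w wᵀ`. Rotating a vector with `q₁(w) > 0` towards one with `q₁(w) < 0` passes through a
`q₁`-isotropic vector, so after finitely many rotations every `q₁(w)` vanishes. Then
`{q₁ ≥ 0} ⊆ {q₂ > 0}` forces `tr (q₂ p) = ∑ q₂(w) > 0` unless `p = 0`.

(i) ⇒ (ii): if `P₁ + P₂` misses the open convex cone of positive definite forms, Hahn–Banach gives
a functional vanishing on `P₁ + P₂` and negative on the cone; minus the symmetric part of the
matrix representing it under the trace pairing is a nonzero positive semidefinite tensor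
annihilating both pencils. (ii) ⇒ (iii) is immediate.
-/

open Matrix

namespace Matrix

variable {n ι : Type*}

lemma vecMulVec_rotate_add {R : Type*} [CommRing R] {c s : R} (hcs : c ^ 2 + s ^ 2 = 1)
    (a b : n → R) :
    vecMulVec (c • a + s • b) (c • a + s • b) + vecMulVec (-s • a + c • b) (-s • a + c • b) =
      vecMulVec a a + vecMulVec b b := by
  ext i j
  simp only [add_apply, vecMulVec_apply, Pi.add_apply, Pi.smul_apply, smul_eq_mul]
  linear_combination (a i * a j + b i * b j) * hcs

variable [Fintype n]

lemma trace_mul_vecMulVec_self {R : Type*} [CommSemiring R] (M : Matrix n n R) (v : n → R) :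
    (M * vecMulVec v v).trace = v ⬝ᵥ (M *ᵥ v) := by
  rw [mul_vecMulVec, trace_vecMulVec, dotProduct_comm]

lemma trace_mul_sum_vecMulVec_self {R : Type*} [CommSemiring R] (s : Finset ι)
    (M : Matrix n n R) (v : ι → n → R) :
    (M * ∑ k ∈ s, vecMulVec (v k) (v k)).trace = ∑ k ∈ s, v k ⬝ᵥ (M *ᵥ v k) := by
  simp only [Matrix.mul_sum, trace_sum, trace_mul_vecMulVec_self]

lemma _root_.LinearMap.exists_eq_trace_mul {R : Type*} [CommSemiring R]
    (f : Matrix n n R →ₗ[R] R) : ∃ M : Matrix n n R, ∀ A, f A = (A * M).trace := by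
  classical
  refine ⟨of fun i j => f (single j i 1), fun A => ?_⟩
  conv_lhs => rw [matrix_eq_sum_single A]
  simp only [map_sum, trace, diag, mul_apply, of_apply]
  refine Finset.sum_congr rfl fun i _ => Finset.sum_congr rfl fun j _ => ?_
  simpa [smul_single] using f.map_smul (A i j) (single i j 1)

lemma isOpen_setOf_forall_dotProduct_mulVec_pos :
    IsOpen {A : Matrix n n ℝ | ∀ v, v ≠ 0 → 0 < v ⬝ᵥ (A *ᵥ v)} := by
  have hcont : Continuous fun p : Matrix n n ℝ × (n → ℝ) => p.2 ⬝ᵥ (p.1 *ᵥ p.2) :=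
    continuous_snd.dotProduct (continuous_fst.matrix_mulVec continuous_snd)
  have hsphere : {A : Matrix n n ℝ | ∀ v, v ≠ 0 → 0 < v ⬝ᵥ (A *ᵥ v)} =
      {A | ∀ v ∈ Metric.sphere (0 : n → ℝ) 1, 0 < v ⬝ᵥ (A *ᵥ v)} := by
    ext A
    refine ⟨fun h v hv => h v (ne_zero_of_mem_unit_sphere ⟨v, hv⟩), fun h v hv => ?_⟩
    have hunit := h (‖v‖⁻¹ • v) (by simpa using norm_smul_inv_norm (𝕜 := ℝ) hv)
    simp only [mulVec_smul, dotProduct_smul, smul_dotProduct, smul_eq_mul] at hunit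
    exact pos_of_mul_pos_right (pos_of_mul_pos_right hunit (by positivity)) (by positivity)
  rw [hsphere, isOpen_iff_mem_nhds]
  exact fun A hA => (isCompact_sphere 0 1).eventually_forall_of_forall_eventually
    fun v hv => (hcont.tendsto (A, v)).eventually (lt_mem_nhds (hA v hv))

lemma convex_setOf_forall_dotProduct_mulVec_pos :
    Convex ℝ {A : Matrix n n ℝ | ∀ v, v ≠ 0 → 0 < v ⬝ᵥ (A *ᵥ v)} := by
  simp only [Set.ofPred_forall]
  refine convex_iInter fun v => convex_iInter fun _ => convex_halfSpace_gt ⟨?_, ?_⟩ 0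
  · intro A B
    simp only [add_mulVec, dotProduct_add]
  · intro c A
    simp only [smul_mulVec, dotProduct_smul]

variable [Fintype ι]

lemma _root_.Fintype.sum_eq_sum_of_eq_off_pair {M : Type*} [AddCommMonoid M] [DecidableEq ι]
    {f g : ι → M} {i j : ι} (hij : i ≠ j) (hfg : ∀ k, k ≠ i → k ≠ j → f k = g k)
    (h : f i + f j = g i + g j) : ∑ k, f k = ∑ k, g k := by
  have hj : j ∈ Finset.univ.erase i := Finset.mem_erase.2 ⟨hij.symm, Finset.mem_univ j⟩
  rw [← Finset.add_sum_erase _ f (Finset.mem_univ i), ← Finset.add_sum_erase _ f hj,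
    ← Finset.add_sum_erase _ g (Finset.mem_univ i), ← Finset.add_sum_erase _ g hj,
    ← add_assoc, ← add_assoc, h]
  exact congrArg _ <| Finset.sum_congr rfl fun k hk =>
    hfg k (Finset.ne_of_mem_erase (Finset.mem_of_mem_erase hk)) (Finset.ne_of_mem_erase hk)

open Real in
lemma exists_rotate_isotropic (M : Matrix n n ℝ) (v : ι → n → ℝ) {i j : ι} (hij : i ≠ j)
    (hi : 0 < v i ⬝ᵥ (M *ᵥ v i)) (hj : v j ⬝ᵥ (M *ᵥ v j) < 0) :
    ∃ w : ι → n → ℝ, ∑ k, vecMulVec (w k) (w k) = ∑ k, vecMulVec (v k) (v k) ∧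
      (∀ k, k ≠ i → k ≠ j → w k = v k) ∧ w i ⬝ᵥ (M *ᵥ w i) = 0 := by
  classical
  let rot (θ : ℝ) : n → ℝ := cos θ • v i + sin θ • v j
  have hcont : Continuous fun θ => rot θ ⬝ᵥ (M *ᵥ rot θ) := by
    have : Continuous rot := by fun_prop
    exact this.dotProduct (continuous_const.matrix_mulVec this)
  obtain ⟨θ, -, hθ⟩ := intermediate_value_Icc' pi_div_two_pos.le hcont.continuousOn
    ⟨by simpa [rot] using hj.le, by simpa [rot] using hi.le⟩
  refine ⟨fun k => if k = i then rot θ else if k = j then -sin θ • v i + cos θ • v j else v k,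
    ?_, fun k hki hkj => by simp [hki, hkj], by simpa using hθ⟩
  refine Fintype.sum_eq_sum_of_eq_off_pair hij (fun k hki hkj => by simp [hki, hkj]) ?_
  simpa [hij.symm] using vecMulVec_rotate_add (cos_sq_add_sin_sq θ) (v i) (v j)

lemma exists_isotropic_of_trace_mul_sum_vecMulVec_eq_zero (M : Matrix n n ℝ) (v : ι → n → ℝ)
    (h : (M * ∑ k, vecMulVec (v k) (v k)).trace = 0) :
    ∃ w : ι → n → ℝ, ∑ k, vecMulVec (w k) (w k) = ∑ k, vecMulVec (v k) (v k) ∧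
      ∀ k, w k ⬝ᵥ (M *ᵥ w k) = 0 := by
  classical
  induction hN : (Finset.univ.filter fun k => v k ⬝ᵥ (M *ᵥ v k) ≠ 0).card
    using Nat.strong_induction_on generalizing v with
  | _ N ih =>
  have hsum : ∑ k, v k ⬝ᵥ (M *ᵥ v k) = 0 := by
    rwa [trace_mul_sum_vecMulVec_self] at h
  by_cases hall : ∀ k, v k ⬝ᵥ (M *ᵥ v k) = 0
  · exact ⟨v, rfl, hall⟩
  obtain ⟨k, hk⟩ := not_forall.1 hall
  obtain ⟨i, -, hi⟩ := Finset.exists_pos_of_sum_zero_of_exists_nonzero _ hsum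
    ⟨k, Finset.mem_univ k, hk⟩
  obtain ⟨j, -, hj⟩ := Finset.exists_pos_of_sum_zero_of_exists_nonzero
    (fun k => -(v k ⬝ᵥ (M *ᵥ v k))) (by simp [hsum]) ⟨k, Finset.mem_univ k, neg_ne_zero.2 hk⟩
  rw [Left.neg_pos_iff] at hj
  obtain ⟨u, hu, hoff, hui⟩ := exists_rotate_isotropic M v (fun h => by subst h; linarith) hi hj
  have hfewer : (Finset.univ.filter fun k => u k ⬝ᵥ (M *ᵥ u k) ≠ 0) ⊆
      (Finset.univ.filter fun k => v k ⬝ᵥ (M *ᵥ v k) ≠ 0).erase i := by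
    intro k hk
    simp only [Finset.mem_filter, Finset.mem_univ, true_and, Finset.mem_erase] at hk ⊢
    refine ⟨fun hki => hk (hki ▸ hui), ?_⟩
    by_cases hkj : k = j
    · exact hkj ▸ hj.ne
    · rwa [← hoff k (fun hki => hk (hki ▸ hui)) hkj]
  obtain ⟨w, hw, hw0⟩ := ih _ (hN ▸ (Finset.card_le_card hfewer).trans_lt
    (Finset.card_erase_lt_of_mem (by simpa using hi.ne'))) u (hu ▸ h) rfl
  exact ⟨w, hw.trans hu, hw0⟩

lemma PosSemidef.exists_eq_sum_vecMulVec_isotropic {p : Matrix n n ℝ} (hp : p.PosSemidef)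
    {M : Matrix n n ℝ} (h : (M * p).trace = 0) :
    ∃ (k : ℕ) (w : Fin k → n → ℝ), p = ∑ i, vecMulVec (w i) (w i) ∧
      ∀ i, w i ⬝ᵥ (M *ᵥ w i) = 0 := by
  obtain ⟨k, v, rfl⟩ := posSemidef_iff_eq_sum_vecMulVec.1 hp
  simp only [star_trivial] at h ⊢
  obtain ⟨w, hw, hw0⟩ := exists_isotropic_of_trace_mul_sum_vecMulVec_eq_zero M v h
  exact ⟨k, w, hw.symm, hw0⟩

lemma PosSemidef.eq_zero_of_trace_mul_eq_zero {q₁ q₂ p : Matrix n n ℝ}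
    (hq : ∀ v, v ≠ 0 → 0 ≤ v ⬝ᵥ (q₁ *ᵥ v) → 0 < v ⬝ᵥ (q₂ *ᵥ v)) (hp : p.PosSemidef)
    (h₁ : (q₁ * p).trace = 0) (h₂ : (q₂ * p).trace = 0) : p = 0 := by
  obtain ⟨k, w, rfl, hw⟩ := hp.exists_eq_sum_vecMulVec_isotropic h₁
  rw [trace_mul_sum_vecMulVec_self] at h₂
  have hnonneg (i : Fin k) : 0 ≤ w i ⬝ᵥ (q₂ *ᵥ w i) := by
    by_cases hwi : w i = 0
    · simp [hwi]
    · exact (hq _ hwi (hw i).ge).le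
  have hw0 (i : Fin k) : w i = 0 := by
    by_contra hwi
    exact (hq _ hwi (hw i).ge).ne'
      ((Finset.sum_eq_zero_iff_of_nonneg fun i _ => hnonneg i).1 h₂ i (Finset.mem_univ i))
  simp [hw0]

lemma exists_posSemidef_trace_mul_eq_neg (f : Matrix n n ℝ →ₗ[ℝ] ℝ)
    (hf : ∀ A : Matrix n n ℝ, A.PosSemidef → f A ≤ 0) :
    ∃ p : Matrix n n ℝ, p.PosSemidef ∧ ∀ q : Matrix n n ℝ, q.IsSymm → (q * p).trace = -f q := by
  obtain ⟨M, hM⟩ := f.exists_eq_trace_mul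
  have htrace (q : Matrix n n ℝ) (hq : q.IsSymm) :
      (q * -((2 : ℝ)⁻¹ • (M + Mᵀ))).trace = -f q := by
    have hMt : (q * Mᵀ).trace = (q * M).trace := by
      rw [← trace_transpose, transpose_mul, transpose_transpose, hq.eq, trace_mul_comm]
    rw [mul_neg, Matrix.mul_smul, mul_add, trace_neg, trace_smul, trace_add, hMt, hM, smul_eq_mul]
    ring
  refine ⟨_, posSemidef_iff_dotProduct_mulVec.2 ⟨?_, fun x => ?_⟩, htrace⟩
  · rw [isHermitian_iff_isSymm, IsSymm, transpose_neg, transpose_smul, transpose_add,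
      transpose_transpose, add_comm]
  · have hx := htrace (vecMulVec x x) (by ext; simp [vecMulVec_apply, mul_comm])
    rw [trace_mul_comm, trace_mul_vecMulVec_self] at hx
    have := hf _ (posSemidef_vecMulVec_self_star x)
    simp only [star_trivial] at this ⊢
    linarith

lemma exists_posSemidef_trace_mul_eq_zero_of_forall_not_posDef
    (W : Submodule ℝ (Matrix n n ℝ)) (hW : ∀ q ∈ W, q.IsSymm) (hpd : ∀ q ∈ W, ¬q.PosDef) :
    ∃ p : Matrix n n ℝ, p ≠ 0 ∧ p.PosSemidef ∧ ∀ q ∈ W, (q * p).trace = 0 := by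
  classical
  set O := {A : Matrix n n ℝ | ∀ v, v ≠ 0 → 0 < v ⬝ᵥ (A *ᵥ v)}
  have hposDef_mem {A : Matrix n n ℝ} (hA : A.PosDef) : A ∈ O := fun v hv => by
    simpa using hA.dotProduct_mulVec_pos hv
  have hOW : Disjoint O W := Set.disjoint_left.2 fun q hqO hqW =>
    hpd q hqW (posDef_iff_dotProduct_mulVec.2 ⟨isHermitian_iff_isSymm.2 (hW q hqW),
      fun v hv => by simpa using hqO v hv⟩)
  obtain ⟨f, u, hfO, hfW⟩ := geometric_hahn_banach_open convex_setOf_forall_dotProduct_mulVec_pos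
    isOpen_setOf_forall_dotProduct_mulVec_pos W.convex hOW
  have hfW0 (q : Matrix n n ℝ) (hq : q ∈ W) : f q = 0 := by
    by_contra hfq
    have := hfW _ (W.smul_mem ((u - 1) / f q) hq)
    rw [map_smul, smul_eq_mul, div_mul_cancel₀ _ hfq] at this
    linarith
  have hfO_neg (A : Matrix n n ℝ) (hA : A ∈ O) : f A < 0 :=
    (hfO A hA).trans_le (by simpa using hfW 0 W.zero_mem)
  have hf1 : f 1 < 0 := hfO_neg 1 (hposDef_mem PosDef.one)
  have hfPSD (A : Matrix n n ℝ) (hA : A.PosSemidef) : f A ≤ 0 := by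
    refine le_of_forall_pos_lt_add fun ε hε => ?_
    have hc : 0 < ε / -f 1 := div_pos hε (neg_pos.2 hf1)
    have := hfO_neg _ (hposDef_mem (PosDef.posSemidef_add hA (PosDef.one.smul hc)))
    rw [map_add, map_smul, smul_eq_mul, div_mul_eq_mul_div, div_neg, mul_div_cancel_right₀ _ hf1.ne]
      at this
    linarith
  obtain ⟨p, hp, hpf⟩ := exists_posSemidef_trace_mul_eq_neg f.toLinearMap hfPSD
  refine ⟨p, fun h0 => ?_, hp, fun q hq => by simp [hpf q (hW q hq), hfW0 q hq]⟩
  have := hpf 1 isSymm_one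
  rw [h0, mul_zero, trace_zero] at this
  simp only [ContinuousLinearMap.coe_coe] at this
  linarith

end Matrix

theorem fitting_pair_tfae_general (m : ℕ)
    (P₁ P₂ : Submodule ℝ (Matrix (Fin m) (Fin m) ℝ))
    (hsym₁ : ∀ q ∈ P₁, q.IsSymm) (hsym₂ : ∀ q ∈ P₂, q.IsSymm) :
    List.TFAE [
      ¬ ∃ p : Matrix (Fin m) (Fin m) ℝ, p ≠ 0 ∧ p.PosSemidef ∧
        (∀ q ∈ P₁, (q * p).trace = 0) ∧ (∀ q ∈ P₂, (q * p).trace = 0),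
      ∃ q₁ ∈ P₁, ∃ q₂ ∈ P₂, (q₂ - q₁).PosDef,
      ∃ q₁ ∈ P₁, ∃ q₂ ∈ P₂, ∀ v : Fin m → ℝ, v ≠ 0 →
        0 ≤ v ⬝ᵥ (q₁ *ᵥ v) → 0 < v ⬝ᵥ (q₂ *ᵥ v)] := by
  tfae_have 1 → 2 := by
    intro h1
    by_contra h2
    obtain ⟨p, hp0, hp, hpW⟩ := exists_posSemidef_trace_mul_eq_zero_of_forall_not_posDef (P₁ ⊔ P₂)
      (fun q hq => by
        obtain ⟨a, ha, b, hb, rfl⟩ := Submodule.mem_sup.1 hq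
        exact (hsym₁ a ha).add (hsym₂ b hb))
      (fun q hq hpd => by
        obtain ⟨a, ha, b, hb, rfl⟩ := Submodule.mem_sup.1 hq
        exact h2 ⟨-a, P₁.neg_mem ha, b, hb, by rwa [sub_neg_eq_add, add_comm]⟩)
    exact h1 ⟨p, hp0, hp, fun q hq => hpW q (Submodule.mem_sup_left hq),
      fun q hq => hpW q (Submodule.mem_sup_right hq)⟩
  tfae_have 2 → 3 := by
    rintro ⟨q₁, hq₁, q₂, hq₂, hpd⟩
    refine ⟨q₁, hq₁, q₂, hq₂, fun v hv hv₁ => ?_⟩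
    have := hpd.dotProduct_mulVec_pos hv
    rw [star_trivial, sub_mulVec, dotProduct_sub] at this
    linarith
  tfae_have 3 → 1 := by
    rintro ⟨q₁, hq₁, q₂, hq₂, hq⟩ ⟨p, hp0, hp, hp₁, hp₂⟩
    exact hp0 (hp.eq_zero_of_trace_mul_eq_zero hq (hp₁ q₁ hq₁) (hp₂ q₂ hq₂))
  tfae_finish

/-- For two mixed pencils `P₁, P₂` of dimension `d` in the space of
quadrics `Q = S²V*` (modelled as symmetric matrices, with the trace pairing), the
following are equivalent: (i) the projectivized sets `P(Pᵢ° ∩ S²V^{≥0})` are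
disjoint, i.e. there is no nonzero PSD tensor in both annihilators; (ii) there are
`q₁ ∈ P₁`, `q₂ ∈ P₂` with `q₂ - q₁` positive definite; (iii) there are `q₁ ∈ P₁`,
`q₂ ∈ P₂` with `{q₁ ≥ 0} ⊆ {q₂ > 0}` in `P(V)`. -/
theorem fitting_pair_tfae (m d : ℕ)
    (P₁ P₂ : Submodule ℝ (Matrix (Fin m) (Fin m) ℝ))
    (hsym₁ : ∀ q ∈ P₁, q.IsSymm) (hsym₂ : ∀ q ∈ P₂, q.IsSymm)
    (hd₁ : Module.finrank ℝ P₁ = d) (hd₂ : Module.finrank ℝ P₂ = d)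
    (hmix₁ : ∀ q ∈ P₁, q.PosSemidef → q = 0)
    (hmix₂ : ∀ q ∈ P₂, q.PosSemidef → q = 0) :
    List.TFAE [
      ¬ ∃ p : Matrix (Fin m) (Fin m) ℝ, p ≠ 0 ∧ p.PosSemidef ∧
        (∀ q ∈ P₁, (q * p).trace = 0) ∧ (∀ q ∈ P₂, (q * p).trace = 0),
      ∃ q₁ ∈ P₁, ∃ q₂ ∈ P₂, (q₂ - q₁).PosDef,
      ∃ q₁ ∈ P₁, ∃ q₂ ∈ P₂, ∀ v : Fin m → ℝ, v ≠ 0 →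
        0 ≤ v ⬝ᵥ (q₁ *ᵥ v) → 0 < v ⬝ᵥ (q₂ *ᵥ v)] :=
  fitting_pair_tfae_general m P₁ P₂ hsym₁ hsym₂
end

section
/- Let q₁, q₂, q₃ be symmetric bilinear forms of mixed signature on a real vector space V such that q₃ − q₂ and q₂ − q₁ are positive definite. Then the cross-ratio distances satisfy cr([q₃],[q₁]) ≥ cr([q₃],[q₂]) · cr([q₂],[q₁]). -/
/-!
Fix a line `L = {[e + y f]}` realizing a cross-ratio for `([q₃],[q₁])`, with zeros
`x₃' < x₁' ≤ x₁ < x₃`. Along `L` the three quadrics restrict to quadratics `P₁ < P₂ < P₃`,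
so `P₂` is positive at the zeros of `P₁` and negative at those of `P₃`. By the intermediate
value theorem `P₂` has zeros `x₂' ∈ (x₃', x₁')` and `x₂ ∈ (x₁, x₃)`, and being quadratic it has
no others. The same line therefore realizes cross-ratios for `([q₃],[q₂])` and `([q₂],[q₁])`,
and the product of these is at most the original one because moving an inner point outwards
only decreases a cross-ratio.
-/

open Matrix ENNReal

/-- A quadric of mixed signature: neither positive nor negative semidefinite. -/
def MixedSig {m : ℕ} (q : Matrix (Fin m) (Fin m) ℝ) : Prop :=
  (∃ v : Fin m → ℝ, 0 < v ⬝ᵥ (q *ᵥ v)) ∧ (∃ v : Fin m → ℝ, v ⬝ᵥ (q *ᵥ v) < 0)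

/-- The set of cross-ratios of the four zeros `ℓ₁, ℓ₂, ℓ₂′, ℓ₁′` (zeros of `q`
outermost, zeros of `q'` innermost) on projective lines `L` meeting the zero sets
of both quadrics; the line is parametrized as `[e + y f]` with `[f]` the point at
infinity of the chart. -/
noncomputable def crSet {m : ℕ} (q' q : Matrix (Fin m) (Fin m) ℝ) : Set ℝ≥0∞ :=
  {c | ∃ e f : Fin m → ℝ, LinearIndependent ℝ ![e, f] ∧
    ∃ x₂' x₁' x₁ x₂ : ℝ, x₂' < x₁' ∧ x₁' ≤ x₁ ∧ x₁ < x₂ ∧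
    (∀ y : ℝ, (e + y • f) ⬝ᵥ (q *ᵥ (e + y • f)) = 0 ↔ (y = x₁' ∨ y = x₁)) ∧
    (∀ y : ℝ, (e + y • f) ⬝ᵥ (q' *ᵥ (e + y • f)) = 0 ↔ (y = x₂' ∨ y = x₂)) ∧
    f ⬝ᵥ (q *ᵥ f) ≠ 0 ∧ f ⬝ᵥ (q' *ᵥ f) ≠ 0 ∧
    c = (ENNReal.ofReal (x₂ - x₁') * ENNReal.ofReal (x₁ - x₂')) /
        (ENNReal.ofReal (x₂ - x₂') * ENNReal.ofReal (x₁ - x₁'))}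

/-- The cross-ratio distance `cr([q'],[q]) ∈ [1,∞]` between nested quadrics
(`q' − q` positive definite). -/
noncomputable def crDist {m : ℕ} (q' q : Matrix (Fin m) (Fin m) ℝ) : ℝ≥0∞ :=
  sInf (crSet q' q)

section CrossRatio

noncomputable def crossRatio (x₂' x₁' x₁ x₂ : ℝ) : ℝ≥0∞ :=
  (ENNReal.ofReal (x₂ - x₁') * ENNReal.ofReal (x₁ - x₂')) /
    (ENNReal.ofReal (x₂ - x₂') * ENNReal.ofReal (x₁ - x₁'))

theorem crossRatio_eq_top {x₂' x₁ x₂ : ℝ} (h₁ : x₂' < x₁) (h₂ : x₁ < x₂) :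
    crossRatio x₂' x₁ x₁ x₂ = ⊤ := by
  rw [crossRatio, sub_self, ENNReal.ofReal_zero, mul_zero]
  exact ENNReal.div_zero <|
    mul_ne_zero (ENNReal.ofReal_pos.2 (sub_pos.2 h₂)).ne' (ENNReal.ofReal_pos.2 (sub_pos.2 h₁)).ne'

theorem crossRatio_eq_ofReal {x₂' x₁' x₁ x₂ : ℝ} (h₁ : x₂' ≤ x₁') (h₂ : x₁' < x₁) (h₃ : x₁ ≤ x₂) :
    crossRatio x₂' x₁' x₁ x₂ =
      ENNReal.ofReal ((x₂ - x₁') * (x₁ - x₂') / ((x₂ - x₂') * (x₁ - x₁'))) := by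
  rw [crossRatio, ← ENNReal.ofReal_mul (by linarith : 0 ≤ x₂ - x₁'),
    ← ENNReal.ofReal_mul (by linarith : 0 ≤ x₂ - x₂'),
    ENNReal.ofReal_div_of_pos (mul_pos (by linarith) (by linarith))]

theorem crossRatio_mul_crossRatio_le {a b c d e f : ℝ} (hab : a < b) (hbc : b < c) (hcd : c ≤ d)
    (hde : d < e) (hef : e < f) :
    crossRatio a b e f * crossRatio b c d e ≤ crossRatio a c d f := by
  obtain rfl | hcd := hcd.eq_or_lt
  · rw [crossRatio_eq_top (x₂' := a) (x₂ := f) (hab.trans hbc) (hde.trans hef)]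
    exact le_top
  rw [crossRatio_eq_ofReal hab.le (by linarith) hef.le, crossRatio_eq_ofReal hbc.le hcd hde.le,
    crossRatio_eq_ofReal (by linarith) hcd (by linarith),
    ← ENNReal.ofReal_mul (div_nonneg (by nlinarith) (by nlinarith))]
  apply ENNReal.ofReal_le_ofReal
  rw [div_mul_div_comm, div_le_div_iff₀
    (mul_pos (mul_pos (by linarith) (by linarith)) (mul_pos (by linarith) (by linarith)))
    (mul_pos (by linarith) (by linarith))]
  have hout : (f - b) * (e - c) ≤ (f - c) * (e - b) := by nlinarith
  have hin : (e - a) * (d - b) ≤ (d - a) * (e - b) := by nlinarith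
  have := mul_le_mul hout hin (by nlinarith) (by nlinarith)
  nlinarith [mul_le_mul_of_nonneg_right this
    (mul_nonneg (by linarith : (0 : ℝ) ≤ f - a) (sub_nonneg.2 hcd.le))]

end CrossRatio

section Quadratic

theorem quadratic_eq_mul_sub_mul_sub {a b c r s : ℝ} (hrs : r ≠ s)
    (hr : a * r ^ 2 + b * r + c = 0) (hs : a * s ^ 2 + b * s + c = 0) (y : ℝ) :
    a * y ^ 2 + b * y + c = a * (y - r) * (y - s) := by
  have hb : b = -(a * (r + s)) := by
    have : (r - s) * (a * (r + s) + b) = 0 := by linear_combination hr - hs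
    linarith [(mul_eq_zero.1 this).resolve_left (sub_ne_zero.2 hrs)]
  have hc : c = a * (r * s) := by
    rw [hb] at hr
    linear_combination hr
  rw [hb, hc]
  ring

theorem exists_quadratic_zeros_between {P₁ P₃ : ℝ → ℝ} {a b c : ℝ}
    (hP₁ : ∀ y, P₁ y < a * y ^ 2 + b * y + c) (hP₃ : ∀ y, a * y ^ 2 + b * y + c < P₃ y)
    {x₃' x₁' x₁ x₃ : ℝ} (h₃₁' : x₃' < x₁') (h₁'₁ : x₁' ≤ x₁) (h₁₃ : x₁ < x₃)
    (hx₁' : P₁ x₁' = 0) (hx₁ : P₁ x₁ = 0) (hx₃' : P₃ x₃' = 0) (hx₃ : P₃ x₃ = 0) :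
    ∃ x₂' x₂, x₃' < x₂' ∧ x₂' < x₁' ∧ x₁ < x₂ ∧ x₂ < x₃ ∧
      (∀ y, a * y ^ 2 + b * y + c = 0 ↔ y = x₂' ∨ y = x₂) ∧ a ≠ 0 := by
  set P₂ : ℝ → ℝ := fun y ↦ a * y ^ 2 + b * y + c
  have hP₂ : Continuous P₂ := by fun_prop
  obtain ⟨x₂', ⟨h₃₂', h₂'₁'⟩, hx₂'⟩ : ∃ x₂' ∈ Set.Ioo x₃' x₁', P₂ x₂' = 0 :=
    intermediate_value_Ioo h₃₁'.le hP₂.continuousOn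
      ⟨by linarith [hP₃ x₃'], by linarith [hP₁ x₁']⟩
  obtain ⟨x₂, ⟨h₁₂, h₂₃⟩, hx₂⟩ : ∃ x₂ ∈ Set.Ioo x₁ x₃, P₂ x₂ = 0 :=
    intermediate_value_Ioo' h₁₃.le hP₂.continuousOn
      ⟨by linarith [hP₃ x₃], by linarith [hP₁ x₁]⟩
  have hfactor := quadratic_eq_mul_sub_mul_sub (by linarith : x₂' ≠ x₂) hx₂' hx₂
  have ha : a ≠ 0 := by
    rintro rfl
    have := hP₁ x₁'
    rw [hfactor, zero_mul, zero_mul, hx₁'] at this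
    exact lt_irrefl _ this
  refine ⟨x₂', x₂, h₃₂', h₂'₁', h₁₂, h₂₃, fun y ↦ ?_, ha⟩
  rw [hfactor, mul_assoc, mul_eq_zero, mul_eq_zero, sub_eq_zero, sub_eq_zero]
  simp [ha]

end Quadratic

section Line

variable {n : Type*} [Fintype n]

theorem dotProduct_mulVec_add_smul {R : Type*} [CommRing R] (q : Matrix n n R) (e f : n → R)
    (y : R) :
    (e + y • f) ⬝ᵥ (q *ᵥ (e + y • f)) =
      f ⬝ᵥ (q *ᵥ f) * y ^ 2 + (e ⬝ᵥ (q *ᵥ f) + f ⬝ᵥ (q *ᵥ e)) * y + e ⬝ᵥ (q *ᵥ e) := by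
  simp only [mulVec_add, mulVec_smul, dotProduct_add, add_dotProduct, dotProduct_smul,
    smul_dotProduct, smul_eq_mul]
  ring

theorem Matrix.PosDef.dotProduct_mulVec_lt {q q' : Matrix n n ℝ}
    (h : (q' - q).PosDef) {v : n → ℝ} (hv : v ≠ 0) :
    v ⬝ᵥ (q *ᵥ v) < v ⬝ᵥ (q' *ᵥ v) := by
  have := h.dotProduct_mulVec_pos hv
  rw [star_trivial, sub_mulVec, dotProduct_sub, sub_pos] at this
  exact this

theorem add_smul_ne_zero_of_linearIndependent {K V : Type*} [DivisionRing K] [AddCommGroup V]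
    [Module K V] {e f : V} (hli : LinearIndependent K ![e, f]) (y : K) : e + y • f ≠ 0 := by
  intro h
  refine (linearIndependent_fin2.1 hli).2 (-y) ?_
  simpa [neg_smul] using neg_eq_of_add_eq_zero_left h

theorem exists_zeros_between_of_posDef {q₁ q₂ q₃ : Matrix n n ℝ}
    (h32 : (q₃ - q₂).PosDef) (h21 : (q₂ - q₁).PosDef) {e f : n → ℝ}
    (hli : LinearIndependent ℝ ![e, f]) {x₃' x₁' x₁ x₃ : ℝ}
    (h₃₁' : x₃' < x₁') (h₁'₁ : x₁' ≤ x₁) (h₁₃ : x₁ < x₃)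
    (hq₁ : ∀ y, (e + y • f) ⬝ᵥ (q₁ *ᵥ (e + y • f)) = 0 ↔ y = x₁' ∨ y = x₁)
    (hq₃ : ∀ y, (e + y • f) ⬝ᵥ (q₃ *ᵥ (e + y • f)) = 0 ↔ y = x₃' ∨ y = x₃) :
    ∃ x₂' x₂, x₃' < x₂' ∧ x₂' < x₁' ∧ x₁ < x₂ ∧ x₂ < x₃ ∧
      (∀ y, (e + y • f) ⬝ᵥ (q₂ *ᵥ (e + y • f)) = 0 ↔ y = x₂' ∨ y = x₂) ∧
      f ⬝ᵥ (q₂ *ᵥ f) ≠ 0 := by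
  have hline := add_smul_ne_zero_of_linearIndependent hli
  simp only [dotProduct_mulVec_add_smul q₂]
  exact exists_quadratic_zeros_between
    (fun y ↦ (dotProduct_mulVec_add_smul q₂ e f y ▸ h21.dotProduct_mulVec_lt (hline y)))
    (fun y ↦ (dotProduct_mulVec_add_smul q₂ e f y ▸ h32.dotProduct_mulVec_lt (hline y)))
    h₃₁' h₁'₁ h₁₃ ((hq₁ _).2 (.inl rfl)) ((hq₁ _).2 (.inr rfl))
    ((hq₃ _).2 (.inl rfl)) ((hq₃ _).2 (.inr rfl))

end Line

theorem crDist_reversed_triangle_general (m : ℕ) (q₁ q₂ q₃ : Matrix (Fin m) (Fin m) ℝ)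
    (h32 : (q₃ - q₂).PosDef) (h21 : (q₂ - q₁).PosDef) :
    crDist q₃ q₂ * crDist q₂ q₁ ≤ crDist q₃ q₁ := by
  refine le_sInf ?_
  rintro _ ⟨e, f, hli, x₃', x₁', x₁, x₃, h₃₁', h₁'₁, h₁₃, hq₁, hq₃, hf₁, hf₃, rfl⟩
  obtain ⟨x₂', x₂, h₃₂', h₂'₁', h₁₂, h₂₃, hq₂, hf₂⟩ :=
    exists_zeros_between_of_posDef h32 h21 hli h₃₁' h₁'₁ h₁₃ hq₁ hq₃
  calc crDist q₃ q₂ * crDist q₂ q₁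
      ≤ crossRatio x₃' x₂' x₂ x₃ * crossRatio x₂' x₁' x₁ x₂ :=
        mul_le_mul' (sInf_le ⟨e, f, hli, x₃', x₂', x₂, x₃, h₃₂', by linarith, h₂₃, hq₂, hq₃, hf₂,
          hf₃, rfl⟩)
          (sInf_le ⟨e, f, hli, x₂', x₁', x₁, x₂, h₂'₁', h₁'₁, h₁₂, hq₁, hq₂, hf₁, hf₂, rfl⟩)
    _ ≤ crossRatio x₃' x₁' x₁ x₃ := crossRatio_mul_crossRatio_le h₃₂' h₂'₁' h₁'₁ h₁₂ h₂₃

/-- For quadrics `q₁, q₂, q₃` of mixed signature with `q₃ − q₂` and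
`q₂ − q₁` positive definite, the cross-ratio distances satisfy the reversed
triangle inequality `cr([q₃],[q₁]) ≥ cr([q₃],[q₂]) · cr([q₂],[q₁])`. -/
theorem crDist_reversed_triangle (m : ℕ) (q₁ q₂ q₃ : Matrix (Fin m) (Fin m) ℝ)
    (hs₁ : q₁.IsSymm) (hs₂ : q₂.IsSymm) (hs₃ : q₃.IsSymm)
    (hm₁ : MixedSig q₁) (hm₂ : MixedSig q₂) (hm₃ : MixedSig q₃)
    (h32 : (q₃ - q₂).PosDef) (h21 : (q₂ - q₁).PosDef) :
    crDist q₃ q₂ * crDist q₂ q₁ ≤ crDist q₃ q₁ :=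
  crDist_reversed_triangle_general m q₁ q₂ q₃ h32 h21
end

section
/- Let q be an ω-regular quadratic form on the symplectic vector space (ℝ^{2n}, ω), i.e. q is positive definite on some Lagrangian and negative definite on some Lagrangian. Then the set of Lagrangians ℓ on which q is positive definite is, in the affine chart of Lagrangians transverse to a fixed Lagrangian ℓ₋ on which q is negative definite, a star-shaped open set; in particular it is an open topological ball. -/
open Matrix
open scoped Classical

/-- `ℝ^{2n}` split as `x`-coordinates and `y`-coordinates of a symplectic basis. -/
abbrev SympV (n : ℕ) := (Fin n → ℝ) × (Fin n → ℝ)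

/-- The standard symplectic form `ω = Σ xᵢ* ∧ yᵢ*`. -/
noncomputable def omg {n : ℕ} (v w : SympV n) : ℝ := v.1 ⬝ᵥ w.2 - w.1 ⬝ᵥ v.2

/-- A Lagrangian subspace: `n`-dimensional and isotropic for `ω`. -/
def IsLagrangian {n : ℕ} (ℓ : Submodule ℝ (SympV n)) : Prop :=
  Module.finrank ℝ ℓ = n ∧ ∀ v ∈ ℓ, ∀ w ∈ ℓ, omg v w = 0

/-- The quadratic form `q_{ℓ,ℓ'}(v) = ω(π(v), π'(v))` associated to a pair of
complementary subspaces (`π, π'` the projections of the splitting `ℓ ⊕ ℓ'`);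
junk value `0` if the subspaces are not complementary. -/
noncomputable def qPair {n : ℕ} (ℓ ℓ' : Submodule ℝ (SympV n)) (v : SympV n) : ℝ :=
  if h : IsCompl ℓ ℓ' then
    omg (ℓ.linearProjOfIsCompl ℓ' h v : SympV n)
      (v - (ℓ.linearProjOfIsCompl ℓ' h v : SympV n))
  else 0

set_option maxHeartbeats 1000000 in
set_option synthInstance.maxHeartbeats 400000 in
/-- Let `q` (given by a symmetric bilinear form `B`) be ω-regular:
positive definite on a Lagrangian `ℓ₊` and negative definite on a Lagrangian `ℓ₋`.
In the chart of Lagrangians transverse to `ℓ₋`, parametrized by (continuous) linear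
maps `u : ℓ₊ → ℓ₋` via their graphs `{x + u x}`, the set of `u` whose graph is a
subspace on which `q` is positive definite is open and star-shaped about `0`;
in particular it is an open topological ball. -/
theorem omega_regular_posDef_chart_starShaped_open (n : ℕ)
    (B : SympV n →ₗ[ℝ] SympV n →ₗ[ℝ] ℝ) (hB : ∀ v w, B v w = B w v)
    (ℓp ℓm : Submodule ℝ (SympV n))
    (hLp : IsLagrangian ℓp) (hLm : IsLagrangian ℓm)
    (hpos : ∀ v ∈ ℓp, v ≠ 0 → 0 < B v v)
    (hneg : ∀ v ∈ ℓm, v ≠ 0 → B v v < 0) :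
    IsOpen {u : ℓp →L[ℝ] ℓm |
        ∀ x : ℓp, x ≠ 0 → 0 < B ((x : SympV n) + (u x : SympV n))
          ((x : SympV n) + (u x : SympV n))} ∧
      StarConvex ℝ 0 {u : ℓp →L[ℝ] ℓm |
        ∀ x : ℓp, x ≠ 0 → 0 < B ((x : SympV n) + (u x : SympV n))
          ((x : SympV n) + (u x : SympV n))} := by
  classical
  set s := {u : ℓp →L[ℝ] ℓm |
        ∀ x : ℓp, x ≠ 0 → 0 < B ((x : SympV n) + (u x : SympV n))
          ((x : SympV n) + (u x : SympV n))} with hs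
  -- scaling of the quadratic form
  have hsq : ∀ (c : ℝ) (v : SympV n), B (c • v) (c • v) = c ^ 2 * B v v := by
    intro c v
    simp [_root_.map_smul, smul_eq_mul]
    ring
  constructor
  · -- openness
    rw [isOpen_iff_mem_nhds]
    intro u₀ hu₀
    -- continuity of the bilinear form
    have hBc : Continuous fun p : SympV n × SympV n => B p.1 p.2 := by
      let g : SympV n →ₗ[ℝ] (SympV n →L[ℝ] ℝ) :=
        (LinearMap.toContinuousLinearMap : (SympV n →ₗ[ℝ] ℝ) ≃ₗ[ℝ]
          (SympV n →L[ℝ] ℝ)).toLinearMap ∘ₗ B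
      have hg : Continuous g := g.continuous_of_finiteDimensional
      have : Continuous fun p : SympV n × SympV n => (g p.1) p.2 := by
        exact isBoundedBilinearMap_apply.continuous.comp
          ((hg.comp continuous_fst).prodMk continuous_snd)
      simpa [g] using this
    have hval : Continuous fun p : (ℓp →L[ℝ] ℓm) × ℓp =>
        ((p.2 : SympV n) + ((p.1 p.2 : ℓm) : SympV n)) := by
      apply Continuous.add
      · exact continuous_subtype_val.comp continuous_snd
      · exact continuous_subtype_val.comp isBoundedBilinearMap_apply.continuous
    have hF : Continuous fun p : (ℓp →L[ℝ] ℓm) × ℓp =>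
        B ((p.2 : SympV n) + ((p.1 p.2 : ℓm) : SympV n))
          ((p.2 : SympV n) + ((p.1 p.2 : ℓm) : SympV n)) :=
      hBc.comp (hval.prodMk hval)
    have hcomp : IsCompact (Metric.sphere (0 : ℓp) 1) := isCompact_sphere 0 1
    have key : ∀ᶠ u in nhds u₀, ∀ x ∈ Metric.sphere (0 : ℓp) 1,
        0 < B ((x : SympV n) + ((u x : ℓm) : SympV n))
          ((x : SympV n) + ((u x : ℓm) : SympV n)) := by
      apply hcomp.eventually_forall_of_forall_eventually
      intro x hx
      have hx0 : x ≠ 0 := by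
        intro h
        rw [Metric.mem_sphere, h] at hx
        simp at hx
      have h0 : 0 < B ((x : SympV n) + ((u₀ x : ℓm) : SympV n))
          ((x : SympV n) + ((u₀ x : ℓm) : SympV n)) := hu₀ x hx0
      have hFc := hF.continuousAt (x := (u₀, x))
      exact continuousAt_const.eventually_lt hFc h0
    filter_upwards [key] with u h
    intro x hx0
    have hc : ‖x‖ ≠ 0 := norm_ne_zero_iff.mpr hx0
    set c : ℝ := ‖x‖ with hcdef
    set x' : ℓp := c⁻¹ • x with hx'def
    have hx' : x' ∈ Metric.sphere (0 : ℓp) 1 := by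
      rw [Metric.mem_sphere, dist_zero_right, hx'def]
      have h2 : ‖(c⁻¹ • x : ℓp)‖ = ‖(c⁻¹ • (x : SympV n) : SympV n)‖ := rfl
      rw [h2, norm_smul, norm_inv, Real.norm_eq_abs, abs_of_nonneg (norm_nonneg _)]
      have h3 : ‖(x : SympV n)‖ = ‖x‖ := rfl
      rw [h3, ← hcdef, inv_mul_cancel₀ hc]
    have hxx : x = c • x' := by
      rw [hx'def, smul_smul, mul_inv_cancel₀ hc, one_smul]
    have huxx : ((u x : ℓm) : SympV n) = c • ((u x' : ℓm) : SympV n) := by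
      rw [hxx]
      simp [_root_.map_smul]
    have hx'sum : ((x : SympV n) + ((u x : ℓm) : SympV n))
        = c • (((x' : ℓp) : SympV n) + ((u x' : ℓm) : SympV n)) := by
      rw [huxx, smul_add]
      congr 1
      rw [hxx]
      simp
    rw [hx'sum, hsq]
    have := h x' hx'
    positivity
  · -- star convexity
    intro u hu a b ha hb hab
    have hb1 : b ≤ 1 := by linarith
    intro x hx0
    have hmem : (a • (0 : ℓp →L[ℝ] ℓm) + b • u) x = b • u x := by
      rw [ContinuousLinearMap.add_apply, ContinuousLinearMap.smul_apply,
        ContinuousLinearMap.smul_apply, ContinuousLinearMap.zero_apply, smul_zero,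
        zero_add]
    have hcoe : (((a • (0 : ℓp →L[ℝ] ℓm) + b • u) x : ℓm) : SympV n)
        = b • ((u x : ℓm) : SympV n) := by
      rw [hmem]; rfl
    rw [hcoe]
    set v : SympV n := (x : SympV n) with hv
    set w : SympV n := ((u x : ℓm) : SympV n) with hw
    have hexp : ∀ t : ℝ, B (v + t • w) (v + t • w)
        = B v v + 2 * t * B v w + t ^ 2 * B w w := by
      intro t
      have hsymm := hB w v
      simp [map_add, _root_.map_smul, smul_eq_mul, hsymm]
      ring
    have hawle : B w w ≤ 0 := by
      rcases eq_or_ne (u x) 0 with h | h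
      · simp [hw, h]
      · have hw0 : w ≠ 0 := by
          simp only [hw]
          exact fun hh => h (Subtype.ext hh)
        exact le_of_lt (hneg w (u x).2 hw0)
    have h0 : 0 < B v v := hpos v x.2 (fun hh => hx0 (Subtype.ext hh))
    have h1 : 0 < B v v + 2 * 1 * B v w + 1 ^ 2 * B w w := by
      have := hu x hx0
      rw [show (x : SympV n) + ((u x : ℓm) : SympV n) = v + (1 : ℝ) • w by
        simp [hv, hw]] at this
      rw [← hexp 1]
      exact this
    rw [hexp b]
    rcases eq_or_lt_of_le hb with hb0 | hb0
    · rw [← hb0]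
      simpa using h0
    · nlinarith [mul_pos hb0 h1, mul_nonneg (sub_nonneg.mpr hb1) h0.le,
        mul_nonneg (mul_nonneg hb (sub_nonneg.mpr hb1)) (neg_nonneg.mpr hawle)]
end

section
/- Let (ℓ₁, ℓ₂, ℓ₃, ℓ₄) be a maximal quadruple of Lagrangians in (ℝ^{2n}, ω), i.e. every cyclically oriented subtriple is maximal. Then the symmetric bilinear form q_{ℓ₄,ℓ₃} − q_{ℓ₁,ℓ₂} is positive definite. In particular the quadric hypersurfaces {q_{ℓ₄,ℓ₃} = 0} and {q_{ℓ₁,ℓ₂} = 0} in P(ℝ^{2n}) are disjoint. -/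
open Matrix
open scoped Classical

/-- A maximal triple of Lagrangians: pairwise transverse and `q_{a,c}` positive
definite on `b` (the characterization of Maslov index `n`). -/
def IsMaximalTriple {n : ℕ} (a b c : Submodule ℝ (SympV n)) : Prop :=
  IsCompl a b ∧ IsCompl b c ∧ IsCompl a c ∧
    ∀ v ∈ b, v ≠ 0 → 0 < qPair a c v

/-!
Write `v = m + r = d + c` along `ℓ₁ ⊕ ℓ₃` and `ℓ₄ ⊕ ℓ₃`. Since `ℓ₃` is isotropic,
`q_{ℓ₄,ℓ₃}(v) - q_{ℓ₁,ℓ₃}(v) = q_{ℓ₁,ℓ₄}(r - c)` with `r - c ∈ ℓ₃`, which is `≥ 0` by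
maximality of `(ℓ₁, ℓ₃, ℓ₄)`, a rotation of `(ℓ₃, ℓ₄, ℓ₁)`. In the same way, isotropy of `ℓ₁`
and maximality of `(ℓ₃, ℓ₁, ℓ₂)` give `q_{ℓ₁,ℓ₃}(v) - q_{ℓ₁,ℓ₂}(v) ≥ 0`. Both differences
vanish only for `v ∈ ℓ₁ ∩ ℓ₃ = 0`.
-/

section Omg

variable {n : ℕ} (u v w : SympV n)

lemma omg_self : omg v v = 0 := by simp [omg]

lemma omg_add_left : omg (u + v) w = omg u w + omg v w := by
  simp only [omg, Prod.fst_add, Prod.snd_add, add_dotProduct, dotProduct_add]; ring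

lemma omg_sub_left : omg (u - v) w = omg u w - omg v w := by
  simp only [omg, Prod.fst_sub, Prod.snd_sub, sub_dotProduct, dotProduct_sub]; ring

lemma omg_add_right : omg u (v + w) = omg u v + omg u w := by
  simp only [omg, Prod.fst_add, Prod.snd_add, add_dotProduct, dotProduct_add]; ring

lemma omg_sub_right : omg u (v - w) = omg u v - omg u w := by
  simp only [omg, Prod.fst_sub, Prod.snd_sub, sub_dotProduct, dotProduct_sub]; ring

lemma omg_neg_left : omg (-v) w = -omg v w := by
  simp only [omg, Prod.fst_neg, Prod.snd_neg, neg_dotProduct, dotProduct_neg]; ring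

lemma omg_comm : omg w v = -omg v w := by simp only [omg]; ring

end Omg

section QPair

variable {n : ℕ}

lemma qPair_add_of_mem {a b : Submodule ℝ (SympV n)} (h : IsCompl a b)
    {p q : SympV n} (hp : p ∈ a) (hq : q ∈ b) :
    qPair a b (p + q) = omg p q := by
  have hproj : a.projectionOnto b h (p + q) = ⟨p, hp⟩ := by
    rw [map_add, Submodule.projectionOnto_apply_of_mem_right h hq, add_zero,
      Submodule.projectionOnto_apply_of_mem_left h hp]
  rw [qPair, dif_pos h, Submodule.linearProjOfIsCompl, hproj, add_sub_cancel_left]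

lemma qPair_zero (a b : Submodule ℝ (SympV n)) : qPair a b 0 = 0 := by
  rw [qPair]
  split_ifs
  · simp [omg]
  · rfl

lemma qPair_comm (a b : Submodule ℝ (SympV n)) (v : SympV n) :
    qPair b a v = -qPair a b v := by
  by_cases h : IsCompl a b
  · obtain ⟨p, q, hp, hq, rfl⟩ := Submodule.codisjoint_iff_exists_add_eq.mp h.codisjoint v
    rw [qPair_add_of_mem h hp hq, add_comm, qPair_add_of_mem h.symm hq hp, omg_comm]
  · rw [qPair, qPair, dif_neg h, dif_neg (fun h' => h h'.symm), neg_zero]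

/-- `s` is the difference of the `L`-components of `v` along `M` and along `N`. -/
lemma exists_qPair_sub_qPair_eq {L M N : Submodule ℝ (SympV n)}
    (hL : ∀ v ∈ L, ∀ w ∈ L, omg v w = 0)
    (hML : IsCompl M L) (hLN : IsCompl L N) (hMN : IsCompl M N) (v : SympV n) :
    ∃ s ∈ L, qPair N L v - qPair M L v = qPair M N s ∧ (s = 0 → v ∈ L) := by
  obtain ⟨m, r, hm, hr, rfl⟩ := Submodule.codisjoint_iff_exists_add_eq.mp hML.codisjoint v
  obtain ⟨d, c, hd, hc, hdc⟩ :=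
    Submodule.codisjoint_iff_exists_add_eq.mp hLN.symm.codisjoint (m + r)
  obtain rfl : d = m + r - c := eq_sub_of_add_eq hdc
  have hs : r - c = -m + (m + r - c) := by abel
  refine ⟨r - c, L.sub_mem hr hc, ?_, fun hs0 => ?_⟩
  · have hNL : qPair N L (m + r) = omg (m + r - c) c := by
      rw [← qPair_add_of_mem hLN.symm hd hc, hdc]
    rw [hNL, qPair_add_of_mem hML hm hr, hs,
      qPair_add_of_mem hMN (M.neg_mem hm) hd]
    simp only [omg_sub_left, omg_add_left, omg_neg_left, omg_sub_right, omg_add_right, omg_self,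
      hL r hr c hc]
    ring
  · have hm0 : m = 0 := by
      refine Submodule.disjoint_def.mp hMN.disjoint m hm ?_
      rwa [sub_eq_zero.mp hs0, add_sub_cancel_right] at hd
    rwa [hm0, zero_add]

end QPair

lemma IsMaximalTriple.rotate {n : ℕ} {a b c : Submodule ℝ (SympV n)}
    (h : IsMaximalTriple a b c) : IsMaximalTriple b c a := by
  obtain ⟨hab, hbc, hac, hpos⟩ := h
  refine ⟨hbc, hac.symm, hab.symm, fun w hw hw0 => ?_⟩
  obtain ⟨p, q, hp, hq, rfl⟩ := Submodule.codisjoint_iff_exists_add_eq.mp hab.symm.codisjoint w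
  have hp0 : p ≠ 0 := by
    rintro rfl
    rw [zero_add] at hw hw0
    exact hw0 (Submodule.disjoint_def.mp hac.disjoint q hq hw)
  -- `q_{a,c}(p) = ω(-q, p + q) = ω(p, q) = q_{b,a}(p + q)`
  have key := hpos p hp hp0
  rwa [show p = -q + (p + q) by abel, qPair_add_of_mem hac (a.neg_mem hq) hw, omg_neg_left,
    omg_comm, omg_add_left, omg_self, add_zero, neg_neg, ← qPair_add_of_mem hab.symm hp hq] at key

lemma IsMaximalTriple.qPair_nonneg {n : ℕ} {a b c : Submodule ℝ (SympV n)}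
    (h : IsMaximalTriple a b c) {v : SympV n} (hv : v ∈ b) : 0 ≤ qPair a c v := by
  rcases eq_or_ne v 0 with rfl | hv0
  · rw [qPair_zero]
  · exact (h.2.2.2 v hv hv0).le

theorem maximal_quadruple_qPair_sub_posDef_general (n : ℕ)
    (ℓ₁ ℓ₂ ℓ₃ ℓ₄ : Submodule ℝ (SympV n))
    (hL₁ : IsLagrangian ℓ₁)
    (hL₃ : IsLagrangian ℓ₃)
    (h123 : IsMaximalTriple ℓ₁ ℓ₂ ℓ₃)
    (h341 : IsMaximalTriple ℓ₃ ℓ₄ ℓ₁) :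
    (∀ v : SympV n, v ≠ 0 → 0 < qPair ℓ₄ ℓ₃ v - qPair ℓ₁ ℓ₂ v) ∧
      ∀ v : SympV n, v ≠ 0 → ¬(qPair ℓ₄ ℓ₃ v = 0 ∧ qPair ℓ₁ ℓ₂ v = 0) := by
  have h134 := h341.rotate.rotate
  have h312 := h123.rotate.rotate
  have hpos : ∀ v : SympV n, v ≠ 0 → 0 < qPair ℓ₄ ℓ₃ v - qPair ℓ₁ ℓ₂ v := by
    intro v hv
    obtain ⟨s₁, hs₁, hq₁, hv₃⟩ :=
      exists_qPair_sub_qPair_eq hL₃.2 h134.1 h134.2.1 h134.2.2.1 v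
    obtain ⟨s₂, hs₂, hq₂, hv₁⟩ :=
      exists_qPair_sub_qPair_eq hL₁.2 h312.1 h312.2.1 h312.2.2.1 v
    rw [qPair_comm ℓ₁ ℓ₂, qPair_comm ℓ₁ ℓ₃] at hq₂
    rcases eq_or_ne s₁ 0 with rfl | hs₁0
    · have hs₂0 : s₂ ≠ 0 := fun hs₂0 =>
        hv (Submodule.disjoint_def.mp h123.2.2.1.disjoint v (hv₁ hs₂0) (hv₃ rfl))
      linarith [qPair_zero ℓ₁ ℓ₄, h312.2.2.2 s₂ hs₂ hs₂0]
    · linarith [h134.2.2.2 s₁ hs₁ hs₁0, h312.qPair_nonneg hs₂]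
  refine ⟨hpos, fun v hv ⟨h₄₃, h₁₂⟩ => ?_⟩
  simpa [h₄₃, h₁₂] using hpos v hv

/-- For a maximal quadruple of Lagrangians `(ℓ₁, ℓ₂, ℓ₃, ℓ₄)` (every
cyclically oriented subtriple maximal), the form `q_{ℓ₄,ℓ₃} − q_{ℓ₁,ℓ₂}` is
positive definite; in particular the quadric hypersurfaces `{q_{ℓ₄,ℓ₃} = 0}` and
`{q_{ℓ₁,ℓ₂} = 0}` in `P(ℝ^{2n})` are disjoint. -/
theorem maximal_quadruple_qPair_sub_posDef (n : ℕ)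
    (ℓ₁ ℓ₂ ℓ₃ ℓ₄ : Submodule ℝ (SympV n))
    (hL₁ : IsLagrangian ℓ₁) (hL₂ : IsLagrangian ℓ₂)
    (hL₃ : IsLagrangian ℓ₃) (hL₄ : IsLagrangian ℓ₄)
    (h123 : IsMaximalTriple ℓ₁ ℓ₂ ℓ₃) (h234 : IsMaximalTriple ℓ₂ ℓ₃ ℓ₄)
    (h341 : IsMaximalTriple ℓ₃ ℓ₄ ℓ₁) (h412 : IsMaximalTriple ℓ₄ ℓ₁ ℓ₂) :
    (∀ v : SympV n, v ≠ 0 → 0 < qPair ℓ₄ ℓ₃ v - qPair ℓ₁ ℓ₂ v) ∧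
      ∀ v : SympV n, v ≠ 0 → ¬(qPair ℓ₄ ℓ₃ v = 0 ∧ qPair ℓ₁ ℓ₂ v = 0) :=
  maximal_quadruple_qPair_sub_posDef_general n ℓ₁ ℓ₂ ℓ₃ ℓ₄ hL₁ hL₃ h123 h341
end

section
/- Let ω be the standard symplectic form on ℝ^{2n} and let X_Sp ⊆ P(S²ℝ^{2n})^{>0} be the set of ω-compatible positive tensors (the symmetric space of Sp(2n,ℝ)). If q ∈ Q = S²(ℝ^{2n})* is an ω-regular quadratic form (positive definite on some Lagrangian and negative definite on some Lagrangian), then at any point of X_Sp, q does not annihilate the tangent space of X_Sp; concretely, at the base point, whose compatible metric is the identity, a symmetric matrix of the block form [[A, B],[−B, A]] with A symmetric and B antisymmetric cannot be ω-regular: if such a form is positive definite on the Lagrangian ⟨x₁,…,xₙ⟩ then A is positive definite, and then it cannot be negative definite on any other Lagrangian. -/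
open Matrix
open scoped Classical

/-- The quadratic form on `ℝ^{2n}` of the block matrix `[[A, B], [−B, A]]` in a
symplectic basis (`x`-block then `y`-block). -/
noncomputable def blockForm {n : ℕ} (A B : Matrix (Fin n) (Fin n) ℝ)
    (v : SympV n) : ℝ :=
  v.1 ⬝ᵥ (A *ᵥ v.1) + v.1 ⬝ᵥ (B *ᵥ v.2) - v.2 ⬝ᵥ (B *ᵥ v.1) + v.2 ⬝ᵥ (A *ᵥ v.2)

/-- At the base point of the symmetric space `X_Sp`, a quadric
annihilating the tangent space of `X_Sp` has the block form `[[A, B], [−B, A]]`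
with `A` symmetric and `B` antisymmetric; such a form cannot be ω-regular: if it is
positive definite on the Lagrangian `⟨x₁, …, xₙ⟩` then `A` is positive definite,
and then it cannot be negative definite on any Lagrangian. -/
theorem block_form_not_omega_regular (n : ℕ) (hn : 0 < n)
    (A B : Matrix (Fin n) (Fin n) ℝ) (hA : A.IsSymm) (hB : Bᵀ = -B)
    (hpos : ∀ x : Fin n → ℝ, x ≠ 0 → 0 < blockForm A B (x, 0)) :
    A.PosDef ∧
      ∀ ℓ : Submodule ℝ (SympV n), IsLagrangian ℓ →
        ¬ ∀ v ∈ ℓ, v ≠ 0 → blockForm A B v < 0 := by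
  have hAq : ∀ x : Fin n → ℝ, x ≠ 0 → 0 < x ⬝ᵥ (A *ᵥ x) := by
    intro x hx
    have := hpos x hx
    simpa [blockForm] using this
  have hApos : A.PosDef := by
    refine Matrix.PosDef.of_dotProduct_mulVec_pos ?_ (fun x hx => ?_)
    · rw [Matrix.IsHermitian, Matrix.conjTranspose]
      ext i j; have := congrFun (congrFun hA i) j
      simpa [Matrix.map_apply, Matrix.transpose_apply, starRingEnd_apply, star_trivial] using this
    · simpa using hAq x hx
  refine ⟨hApos, ?_⟩
  intro ℓ hL hneg
  have hB' : ∀ i j, B j i = -B i j := fun i j => by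
    have := congrFun (congrFun hB i) j
    simpa [Matrix.transpose_apply] using this
  by_cases hcase : ∃ v ∈ ℓ, v ≠ 0 ∧ v.2 = 0
  · obtain ⟨v, hvℓ, hv0, hv2⟩ := hcase
    have h1 : v.1 ≠ 0 := by
      intro h
      apply hv0
      exact Prod.ext h hv2
    have h2 := hneg v hvℓ hv0
    have h3 := hpos v.1 h1
    have h4 : blockForm A B (v.1, 0) = blockForm A B v := by
      rw [← hv2, Prod.mk.eta]
    linarith
  · push_neg at hcase
    -- projection to second coordinate is injective on ℓ, hence surjective
    set π : ℓ →ₗ[ℝ] (Fin n → ℝ) :=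
      (LinearMap.snd ℝ (Fin n → ℝ) (Fin n → ℝ)).comp ℓ.subtype with hπ
    have hinj : Function.Injective π := by
      rw [← LinearMap.ker_eq_bot]
      rw [Submodule.eq_bot_iff]
      rintro ⟨v, hv⟩ hker
      have h2 : v.2 = 0 := hker
      have : v = 0 := by
        by_contra h0
        exact hcase v hv h0 h2
      simpa using this
    have hsurj : Function.Surjective π := by
      have hfd : FiniteDimensional ℝ ℓ := by
        have : FiniteDimensional ℝ (SympV n) := by infer_instance
        exact FiniteDimensional.finiteDimensional_submodule ℓ
      have hdim : Module.finrank ℝ ℓ = Module.finrank ℝ (Fin n → ℝ) := by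
        rw [hL.1, Module.finrank_fin_fun]
      exact (LinearMap.injective_iff_surjective_of_finrank_eq_finrank hdim).mp hinj
    choose v hv using fun i => hsurj (Pi.single i 1)
    -- v i : ℓ with second coordinate = e_i
    set p : Fin n → Fin n → ℝ := fun i => ((v i : SympV n)).1 with hp
    have hv2 : ∀ i, ((v i : SympV n)).2 = Pi.single i 1 := fun i => hv i
    -- symmetry from the Lagrangian condition
    have hsymm : ∀ i j, p i j = p j i := by
      intro i j
      have := hL.2 (v i) (v i).2 (v j) (v j).2
      rw [omg] at this
      rw [hv2 i, hv2 j] at this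
      have h1 : p i ⬝ᵥ Pi.single j 1 = p j ⬝ᵥ Pi.single i 1 := by
        dsimp [p]; linarith [this]
      simpa [dotProduct_single] using h1
    -- each v i is nonzero, so blockForm < 0 on it
    have hne : ∀ i, (v i : SympV n) ≠ 0 := by
      intro i h
      have : ((v i : SympV n)).2 = 0 := by rw [h]; rfl
      rw [hv2 i] at this
      have := congrFun this i
      simp at this
    have hlt : ∀ i, blockForm A B (v i) < 0 := fun i =>
      hneg (v i) (v i).2 (hne i)
    -- expand blockForm on v i
    have hexp : ∀ i, blockForm A B (v i) =
        p i ⬝ᵥ (A *ᵥ p i) + (∑ j, p i j * B j i) - (∑ j, B i j * p i j) + A i i := by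
      intro i
      rw [blockForm]
      rw [show ((v i : SympV n)).2 = Pi.single i 1 from hv2 i]
      congr 1
      · congr 1
        · congr 1
          · simp [mulVec_single, dotProduct]; rfl
        · rw [single_dotProduct]; simp [mulVec, dotProduct]; rfl
      · rw [single_dotProduct]; simp [mulVec_single]
    -- the cross terms sum to zero
    have hcross : ∑ i, ((∑ j, p i j * B j i) - (∑ j, B i j * p i j)) = 0 := by
      have key : ∑ i, ∑ j, p i j * B j i = 0 := by
        have h1 : ∑ i, ∑ j, p i j * B j i = ∑ j, ∑ i, p i j * B j i :=
          Finset.sum_comm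
        have h2 : (∑ j, ∑ i, p i j * B j i) = ∑ i, ∑ j, (- (p i j * B j i)) := by
          apply Finset.sum_congr rfl
          intro j _
          apply Finset.sum_congr rfl
          intro i _
          rw [hsymm i j, hB' i j]
          ring
        have h3 : (∑ i, ∑ j, (- (p i j * B j i))) = - ∑ i, ∑ j, p i j * B j i := by
          simp [Finset.sum_neg_distrib]
        rw [h1, h2, h3] at *
        linarith [h1]
      have h4 : ∀ i, ((∑ j, p i j * B j i) - (∑ j, B i j * p i j))
          = 2 * ∑ j, p i j * B j i := by
        intro i
        have : (∑ j, B i j * p i j) = ∑ j, (- (p i j * B j i)) := by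
          apply Finset.sum_congr rfl
          intro j _
          rw [hB' j i]; ring
        rw [this]
        simp [Finset.sum_neg_distrib]
        ring
      calc ∑ i, ((∑ j, p i j * B j i) - (∑ j, B i j * p i j))
          = ∑ i, 2 * ∑ j, p i j * B j i := Finset.sum_congr rfl (fun i _ => h4 i)
        _ = 2 * ∑ i, ∑ j, p i j * B j i := by rw [Finset.mul_sum]
        _ = 0 := by rw [key]; ring
    -- now sum the negativity
    have hS : ∑ i, blockForm A B (v i) < 0 := by
      have : ∑ i, blockForm A B (v i) < ∑ _i : Fin n, (0:ℝ) := by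
        apply Finset.sum_lt_sum_of_nonempty
        · exact Finset.univ_nonempty_iff.mpr ⟨⟨0, hn⟩⟩
        · intro i _; exact hlt i
      simpa using this
    have hS' : 0 < ∑ i, blockForm A B (v i) := by
      have heq : ∑ i, blockForm A B (v i) =
          (∑ i, (p i ⬝ᵥ (A *ᵥ p i) + A i i))
          + ∑ i, ((∑ j, p i j * B j i) - (∑ j, B i j * p i j)) := by
        rw [← Finset.sum_add_distrib]
        apply Finset.sum_congr rfl
        intro i _
        rw [hexp i]; ring
      rw [heq, hcross, add_zero]
      apply Finset.sum_pos
      · intro i _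
        have hAii : 0 < A i i := by
          have h := hAq (Pi.single i 1) (by
            intro h
            have := congrFun h i
            simp at this)
          rw [single_dotProduct] at h
          simpa [mulVec_single] using h
        have hpsd : 0 ≤ p i ⬝ᵥ (A *ᵥ p i) := by
          by_cases hp0 : p i = 0
          · simp [hp0]
          · exact le_of_lt (hAq (p i) hp0)
        linarith
      · exact Finset.univ_nonempty_iff.mpr ⟨⟨0, hn⟩⟩
    linarith
end

section
/- In the symplectic vector space (ℝ⁴, ω) with symplectic basis (x₁, x₂, y₁, y₂), let ℓ(θ) = ⟨cos(θ/2)x₁ + sin(θ/2)y₁, cos(θ/2)x₂ + sin(θ/2)y₂⟩ for θ ∈ [0, 2π]. Then the quadratic forms q_{ℓ(θ), ℓ(θ+π)} span a 2-dimensional subspace of S²(ℝ⁴)* as θ varies, each ℓ(θ) is a Lagrangian, and every nonzero form in this 2-plane is ω-regular (positive definite on some Lagrangian and negative definite on some Lagrangian). -/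
open Matrix
open scoped Classical

/-- The family of Lagrangians `ℓ(θ) = ⟨cos(θ/2)x₁ + sin(θ/2)y₁,
cos(θ/2)x₂ + sin(θ/2)y₂⟩` in `(ℝ⁴, ω)`. -/
noncomputable def ellTheta (θ : ℝ) : Submodule ℝ (SympV 2) :=
  Submodule.span ℝ
    {(Real.cos (θ / 2) • (Pi.single 0 1 : Fin 2 → ℝ),
        Real.sin (θ / 2) • (Pi.single 0 1 : Fin 2 → ℝ)),
      (Real.cos (θ / 2) • (Pi.single 1 1 : Fin 2 → ℝ),
        Real.sin (θ / 2) • (Pi.single 1 1 : Fin 2 → ℝ))}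

/-! Write `ℓ(p, q) = {(p • u, q • u)}`. Then `ω((p u, q u), (p' u', q' u')) = (p q' - q p') u ⬝ᵥ u'`,
so every `ℓ(p, q)` with `(p, q) ≠ 0` is Lagrangian, `ℓ(p, q)` and `ℓ(p', q')` are transverse when
`p q' ≠ q p'`, and with `c = cos (θ/2)`, `s = sin (θ/2)` one has `ℓ(θ) = ℓ(c, s)`,
`ℓ(θ + π) = ℓ(-s, c)` and `q_{ℓ(θ), ℓ(θ+π)}(x, y) = (c x + s y) ⬝ᵥ (-s x + c y)`, which is
`sin θ · (|y|² - |x|²)/2 + cos θ · x ⬝ᵥ y`. On `ℓ(p, q)` the form `α qSin + β qCos` is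
`(α (q² - p²)/2 + β p q) |u|²`; this binary form in `(p, q)` has trace zero, hence takes a positive
value unless `α = β = 0`, and applying this to `-F` gives the negative definite Lagrangian. -/

section Slope

variable {n : ℕ}

noncomputable def slopeMap (p q : ℝ) : (Fin n → ℝ) →ₗ[ℝ] SympV n :=
  (p • LinearMap.id).prod (q • LinearMap.id)

noncomputable def ellSlope (n : ℕ) (p q : ℝ) : Submodule ℝ (SympV n) :=
  LinearMap.range (slopeMap p q)

@[simp] lemma slopeMap_apply (p q : ℝ) (u : Fin n → ℝ) : slopeMap p q u = (p • u, q • u) := rfl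

lemma omg_slopeMap (p q p' q' : ℝ) (u u' : Fin n → ℝ) :
    omg (slopeMap p q u) (slopeMap p' q' u') = (p * q' - q * p') * (u ⬝ᵥ u') := by
  simp only [omg, slopeMap_apply, smul_dotProduct, dotProduct_smul, smul_eq_mul,
    dotProduct_comm u' u]
  ring

lemma slopeMap_injective {p q : ℝ} (h : p ≠ 0 ∨ q ≠ 0) :
    Function.Injective (slopeMap (n := n) p q) := by
  rw [← LinearMap.ker_eq_bot, LinearMap.ker_eq_bot']
  intro u hu
  simp only [slopeMap_apply, Prod.mk_eq_zero, smul_eq_zero] at hu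
  tauto

lemma finrank_ellSlope {p q : ℝ} (h : p ≠ 0 ∨ q ≠ 0) : Module.finrank ℝ (ellSlope n p q) = n := by
  rw [ellSlope, LinearMap.finrank_range_of_inj (slopeMap_injective h), Module.finrank_fin_fun]

lemma isLagrangian_ellSlope {p q : ℝ} (h : p ≠ 0 ∨ q ≠ 0) : IsLagrangian (ellSlope n p q) := by
  refine ⟨finrank_ellSlope h, ?_⟩
  rintro _ ⟨u, rfl⟩ _ ⟨u', rfl⟩
  rw [omg_slopeMap, mul_comm q p, sub_self, zero_mul]

lemma isCompl_ellSlope {p q p' q' : ℝ} (h : p * q' - q * p' ≠ 0) :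
    IsCompl (ellSlope n p q) (ellSlope n p' q') := by
  have hpq : p ≠ 0 ∨ q ≠ 0 := by by_contra! h0; simp [h0] at h
  have hpq' : p' ≠ 0 ∨ q' ≠ 0 := by by_contra! h0; simp [h0] at h
  rw [Submodule.isCompl_iff_disjoint _ _ (by simp [finrank_ellSlope hpq, finrank_ellSlope hpq']),
    Submodule.disjoint_def]
  rintro _ ⟨u, rfl⟩ ⟨u', hu'⟩
  simp only [slopeMap_apply, Prod.mk.injEq] at hu'
  have hu : (p * q' - q * p') • u = 0 := by
    linear_combination (norm := module) (-q') • hu'.1 + p' • hu'.2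
  simp [(smul_eq_zero_iff_right h).mp hu]

end Slope

lemma qPair_add_of_isCompl {n : ℕ} {ℓ ℓ' : Submodule ℝ (SympV n)} (h : IsCompl ℓ ℓ')
    {w z : SympV n} (hw : w ∈ ℓ) (hz : z ∈ ℓ') : qPair ℓ ℓ' (w + z) = omg w z := by
  have hproj : (ℓ.projectionOnto ℓ' h (w + z) : SympV n) = w := by
    rw [map_add, Submodule.projectionOnto_apply_of_mem_left h hw,
      Submodule.projectionOnto_apply_of_mem_right h hz, add_zero]
  rw [qPair, dif_pos h, Submodule.linearProjOfIsCompl, hproj, add_sub_cancel_left]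

lemma ellTheta_eq (θ : ℝ) : ellTheta θ = ellSlope 2 (Real.cos (θ / 2)) (Real.sin (θ / 2)) := by
  rw [ellTheta, ellSlope, LinearMap.range_eq_map, ← (Pi.basisFun ℝ (Fin 2)).span_eq,
    ← Submodule.span_image]
  congr 1
  ext v
  simp [Fin.exists_fin_two, eq_comm]

lemma ellTheta_add_pi (θ : ℝ) :
    ellTheta (θ + Real.pi) = ellSlope 2 (-Real.sin (θ / 2)) (Real.cos (θ / 2)) := by
  rw [ellTheta_eq, add_div, Real.cos_add_pi_div_two, Real.sin_add_pi_div_two]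

lemma isLagrangian_ellTheta (θ : ℝ) : IsLagrangian (ellTheta θ) := by
  rw [ellTheta_eq]
  refine isLagrangian_ellSlope (not_and_or.mp fun h => ?_)
  simpa [h.1, h.2] using Real.cos_sq_add_sin_sq (θ / 2)

lemma isCompl_ellTheta_add_pi (θ : ℝ) : IsCompl (ellTheta θ) (ellTheta (θ + Real.pi)) := by
  rw [ellTheta_eq, ellTheta_add_pi]
  exact isCompl_ellSlope (by nlinarith [Real.cos_sq_add_sin_sq (θ / 2)])

section Pencil

variable {n : ℕ}

noncomputable def qSin (v : SympV n) : ℝ := (v.2 ⬝ᵥ v.2 - v.1 ⬝ᵥ v.1) / 2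

noncomputable def qCos (v : SympV n) : ℝ := v.1 ⬝ᵥ v.2

lemma qPair_ellTheta (θ : ℝ) :
    qPair (ellTheta θ) (ellTheta (θ + Real.pi)) = Real.sin θ • qSin + Real.cos θ • qCos := by
  funext ⟨x, y⟩
  set c := Real.cos (θ / 2)
  set s := Real.sin (θ / 2)
  have hcs : c ^ 2 + s ^ 2 = 1 := Real.cos_sq_add_sin_sq (θ / 2)
  have hsin : Real.sin θ = 2 * s * c := by rw [← Real.sin_two_mul]; ring_nf
  have hcos : Real.cos θ = c ^ 2 - s ^ 2 := by rw [← Real.cos_two_mul']; ring_nf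
  have hxy : (x, y) = slopeMap c s (c • x + s • y) + slopeMap (-s) c (-s • x + c • y) := by
    simp only [slopeMap_apply, Prod.mk_add_mk, Prod.mk.injEq]
    constructor
    · linear_combination (norm := module) -hcs • x
    · linear_combination (norm := module) -hcs • y
  have hq : qPair (ellTheta θ) (ellTheta (θ + Real.pi)) (x, y) =
      (c • x + s • y) ⬝ᵥ (-s • x + c • y) := by
    rw [hxy, qPair_add_of_isCompl (isCompl_ellTheta_add_pi θ)
      (by rw [ellTheta_eq]; exact LinearMap.mem_range_self _ _)
      (by rw [ellTheta_add_pi]; exact LinearMap.mem_range_self _ _), omg_slopeMap]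
    linear_combination ((c • x + s • y) ⬝ᵥ (-s • x + c • y)) * hcs
  rw [hq]
  simp only [Pi.add_apply, Pi.smul_apply, smul_eq_mul, qSin, qCos, hsin, hcos, add_dotProduct,
    dotProduct_add, smul_dotProduct, dotProduct_smul, dotProduct_comm y x]
  ring

lemma span_range_qPair_ellTheta :
    Submodule.span ℝ (Set.range fun θ : ℝ =>
        (qPair (ellTheta θ) (ellTheta (θ + Real.pi)) : SympV 2 → ℝ)) =
      Submodule.span ℝ {qSin, qCos} := by
  apply le_antisymm <;> rw [Submodule.span_le]
  · rintro _ ⟨θ, rfl⟩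
    exact Submodule.mem_span_pair.mpr ⟨_, _, (qPair_ellTheta θ).symm⟩
  · rintro _ (rfl | rfl)
    · exact Submodule.subset_span ⟨Real.pi / 2, by simp only [qPair_ellTheta]; simp⟩
    · exact Submodule.subset_span ⟨0, by simp only [qPair_ellTheta]; simp⟩

lemma linearIndependent_qSin_qCos [NeZero n] :
    LinearIndependent ℝ ![(qSin : SympV n → ℝ), qCos] := by
  rw [LinearIndependent.pair_iff]
  intro a b hab
  have h₁ := congrFun hab (0, Pi.single 0 1)
  have h₂ := congrFun hab (Pi.single 0 1, Pi.single 0 1)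
  simp [qSin, qCos] at h₁ h₂
  constructor <;> linarith

lemma finrank_span_qSin_qCos [NeZero n] :
    Module.finrank ℝ (Submodule.span ℝ {(qSin : SympV n → ℝ), qCos}) = 2 := by
  rw [← Matrix.range_cons_cons_empty qSin qCos ![],
    finrank_span_eq_card linearIndependent_qSin_qCos, Fintype.card_fin]

lemma qSin_qCos_slopeMap (α β p q : ℝ) (u : Fin n → ℝ) :
    (α • qSin + β • qCos : SympV n → ℝ) (slopeMap p q u) =
      (α * (q ^ 2 - p ^ 2) / 2 + β * (p * q)) * (u ⬝ᵥ u) := by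
  simp only [Pi.add_apply, Pi.smul_apply, smul_eq_mul, qSin, qCos, slopeMap_apply,
    smul_dotProduct, dotProduct_smul]
  ring

lemma exists_isLagrangian_pos {F : SympV n → ℝ} (hF : F ∈ Submodule.span ℝ {qSin, qCos})
    (hF0 : F ≠ 0) : ∃ ℓ : Submodule ℝ (SympV n), IsLagrangian ℓ ∧ ∀ v ∈ ℓ, v ≠ 0 → 0 < F v := by
  obtain ⟨α, β, rfl⟩ := Submodule.mem_span_pair.mp hF
  obtain ⟨p, q, hpos⟩ : ∃ p q : ℝ, 0 < α * (q ^ 2 - p ^ 2) / 2 + β * (p * q) := by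
    rcases lt_trichotomy α 0 with hα | rfl | hα
    · exact ⟨1, 0, by linarith⟩
    · have hβ : β ≠ 0 := by rintro rfl; simp at hF0
      rcases hβ.lt_or_gt with hβ | hβ
      · exact ⟨1, -1, by linarith⟩
      · exact ⟨1, 1, by linarith⟩
    · exact ⟨0, 1, by linarith⟩
  have hpq : p ≠ 0 ∨ q ≠ 0 := by
    by_contra! h0
    simp [h0] at hpos
  refine ⟨ellSlope n p q, isLagrangian_ellSlope hpq, ?_⟩
  rintro _ ⟨u, rfl⟩ hu
  have hu0 : u ≠ 0 := by rintro rfl; simp at hu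
  rw [qSin_qCos_slopeMap]
  exact mul_pos hpos (by simpa using Matrix.dotProduct_star_self_pos_iff.mpr hu0)

end Pencil

/-- Each `ℓ(θ)` is a Lagrangian transverse to `ℓ(θ+π)`, the quadratic
forms `q_{ℓ(θ), ℓ(θ+π)}` span a 2-dimensional space of quadrics as `θ` varies, and
every nonzero form in this 2-plane is ω-regular (positive definite on some
Lagrangian and negative definite on some Lagrangian). -/
theorem pencil_of_spacelike_plane_omega_regular :
    (∀ θ : ℝ, IsLagrangian (ellTheta θ)) ∧
    (∀ θ : ℝ, IsCompl (ellTheta θ) (ellTheta (θ + Real.pi))) ∧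
    (Module.finrank ℝ (Submodule.span ℝ
        (Set.range fun θ : ℝ => (qPair (ellTheta θ) (ellTheta (θ + Real.pi)) :
          SympV 2 → ℝ))) = 2) ∧
    (∀ F ∈ Submodule.span ℝ
        (Set.range fun θ : ℝ => (qPair (ellTheta θ) (ellTheta (θ + Real.pi)) :
          SympV 2 → ℝ)), F ≠ 0 →
      (∃ ℓ : Submodule ℝ (SympV 2), IsLagrangian ℓ ∧
          ∀ v ∈ ℓ, v ≠ 0 → 0 < F v) ∧
      (∃ ℓ : Submodule ℝ (SympV 2), IsLagrangian ℓ ∧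
          ∀ v ∈ ℓ, v ≠ 0 → F v < 0)) := by
  refine ⟨isLagrangian_ellTheta, isCompl_ellTheta_add_pi, ?_, ?_⟩
  · rw [span_range_qPair_ellTheta, finrank_span_qSin_qCos]
  · intro F hF hF0
    rw [span_range_qPair_ellTheta] at hF
    refine ⟨exists_isLagrangian_pos hF hF0, ?_⟩
    obtain ⟨ℓ, hℓ, hneg⟩ := exists_isLagrangian_pos (neg_mem hF) (neg_ne_zero.mpr hF0)
    exact ⟨ℓ, hℓ, fun v hv hv0 => neg_pos.mp (hneg v hv hv0)⟩
end
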